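/- arXiv:1612.03854 — 6 statements merged into one kernel-verified Lean document; each statement's English description precedes it below -/
import Mathlib

section
/- Let a : Fin n → ℕ with ∑ i, a i = 2S and let c = (∑ i, (a i)²)/2 (over ℚ). Then there exists J ⊆ Fin n with ∑ i ∈ J, a i = S if and only if there exists J ⊆ Fin n such that (1/2)((∑ i ∈ J, a i)² - ∑ i ∈ J, (a i)²) + (1/2)((∑ i ∉ J, a i)² - ∑ i ∉ J, (a i)²) ≤ S² - c. -/
open Finset

/-- Let a : Fin n → ℕ with ∑ i, a i = 2S and c = (∑ i, (a i)²)/2 over ℚ.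
Then there exists J with ∑_{i ∈ J} a i = S iff there exists J with
(1/2)((∑_{i∈J} a i)² - ∑_{i∈J} (a i)²) + (1/2)((∑_{i∉J} a i)² - ∑_{i∉J} (a i)²) ≤ S² - c. -/
theorem stmt4 (n S : ℕ) (a : Fin n → ℕ) (hsum : ∑ i, a i = 2 * S)
    (c : ℚ) (hc : c = (∑ i, (a i : ℚ) ^ 2) / 2) :
    (∃ J : Finset (Fin n), ∑ i ∈ J, a i = S) ↔
      (∃ J : Finset (Fin n),
        (1 / 2 : ℚ) * ((∑ i ∈ J, (a i : ℚ)) ^ 2 - ∑ i ∈ J, (a i : ℚ) ^ 2)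
          + (1 / 2 : ℚ) * ((∑ i ∈ Jᶜ, (a i : ℚ)) ^ 2 - ∑ i ∈ Jᶜ, (a i : ℚ) ^ 2)
          ≤ (S : ℚ) ^ 2 - c) := by
  have key : ∀ J : Finset (Fin n),
      ((∑ i ∈ J, (a i : ℚ)) ^ 2 + (∑ i ∈ Jᶜ, (a i : ℚ)) ^ 2) =
        2 * (S : ℚ) ^ 2 + ((∑ i ∈ J, (a i : ℚ)) - S) ^ 2 * 2 := by
    intro J
    have h1 : (∑ i ∈ J, (a i : ℚ)) + ∑ i ∈ Jᶜ, (a i : ℚ) = 2 * S := by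
      rw [Finset.sum_add_sum_compl, ← Nat.cast_sum, hsum]
      push_cast
      ring
    have h2 : (∑ i ∈ Jᶜ, (a i : ℚ)) = 2 * S - ∑ i ∈ J, (a i : ℚ) := by linarith
    rw [h2]; ring
  have hsq : ∀ J : Finset (Fin n),
      (∑ i ∈ J, (a i : ℚ) ^ 2) + ∑ i ∈ Jᶜ, (a i : ℚ) ^ 2 = 2 * c := by
    intro J
    rw [Finset.sum_add_sum_compl, hc]; ring
  constructor
  · rintro ⟨J, hJ⟩
    refine ⟨J, ?_⟩
    have hk := key J
    have hs := hsq J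
    have hx : (∑ i ∈ J, (a i : ℚ)) = S := by
      rw [← hJ]; push_cast; ring
    rw [hx] at hk
    nlinarith [hk, hs]
  · rintro ⟨J, hJ⟩
    have hk := key J
    have hs := hsq J
    have hx : (∑ i ∈ J, (a i : ℚ)) = S := by
      nlinarith [sq_nonneg ((∑ i ∈ J, (a i : ℚ)) - S)]
    refine ⟨J, ?_⟩
    have : ((∑ i ∈ J, a i : ℕ) : ℚ) = (S : ℚ) := by push_cast; exact hx
    exact_mod_cast this
end

section
/- Let G be a graph with an alternating width-3 path decomposition and clusters C₁,…,C_κ. Then every vertex of G belongs to V(C_i) for some i, the anchor-triplets satisfy T(C_{i+1}) = T(C_i) ∪ {x⁺_i} \ {x⁻_{i+1}} for each 1 ≤ i < κ (where x⁺_i is the emerging vertex of C_i and x⁻_{i+1} the lost vertex of C_{i+1}), and consecutive clusters share exactly one bag, which has size 4. -/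
/-- An alternating path decomposition of width 3 of a graph `G` on `n > 4` vertices:
`ξ = 2n - 7` bags, sizes alternate 4 (odd index) / 3 (even index), even bags contained
in both neighbors, every edge covered by a bag, occurrences of each vertex convex
(interval property), and every vertex occurs in some bag. -/
def IsAltPD3 {V : Type*} [DecidableEq V] [Fintype V] (G : SimpleGraph V)
    (bag : ℕ → Finset V) (ξ : ℕ) : Prop :=
  ξ = 2 * Fintype.card V - 7 ∧ 4 < Fintype.card V ∧
  (∀ i, 1 ≤ i → i ≤ ξ → i % 2 = 1 → (bag i).card = 4) ∧
  (∀ i, 1 ≤ i → i ≤ ξ → i % 2 = 0 → (bag i).card = 3) ∧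
  (∀ i, 1 < i → i < ξ → i % 2 = 0 → bag i ⊆ bag (i - 1) ∧ bag i ⊆ bag (i + 1)) ∧
  (∀ u v : V, G.Adj u v → ∃ i, 1 ≤ i ∧ i ≤ ξ ∧ u ∈ bag i ∧ v ∈ bag i) ∧
  (∀ (x : V) (i j k : ℕ), 1 ≤ i → j ≤ ξ → i ≤ k → k ≤ j →
    x ∈ bag i → x ∈ bag j → x ∈ bag k) ∧
  (∀ x : V, ∃ i, 1 ≤ i ∧ i ≤ ξ ∧ x ∈ bag i)

/-- A cluster of an alternating width-3 path decomposition: a maximal consecutive run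
`[a,b]` of bags all containing the 3-set `Y`, where `Y` constitutes at least one bag.
`Y` is the anchor-triplet of the cluster. -/
def IsCluster {V : Type*} [DecidableEq V] (bag : ℕ → Finset V) (ξ a b : ℕ)
    (Y : Finset V) : Prop :=
  1 ≤ a ∧ a ≤ b ∧ b ≤ ξ ∧ Y.card = 3 ∧ (∃ i, a ≤ i ∧ i ≤ b ∧ bag i = Y) ∧
  (∀ i, a ≤ i → i ≤ b → Y ⊆ bag i) ∧
  (a = 1 ∨ ¬ Y ⊆ bag (a - 1)) ∧ (b = ξ ∨ ¬ Y ⊆ bag (b + 1))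

/-- The vertex set `V(C)` of a cluster occupying bags `a,…,b`. -/
def clusterVerts {V : Type*} [DecidableEq V] (bag : ℕ → Finset V) (a b : ℕ) : Finset V :=
  (Finset.Icc a b).biUnion bag

/-- The emerging vertex of a cluster with last bag `b`: the vertex introduced by the
last bag, as a (singleton) set `X_b \ X_{b-1}`. -/
def emergeSet {V : Type*} [DecidableEq V] (bag : ℕ → Finset V) (b : ℕ) : Finset V :=
  bag b \ bag (b - 1)

/-- The lost vertex of a cluster with first bag `a`: the vertex forgotten by the
second bag of the cluster, as a (singleton) set `X_a \ X_{a+1}`. -/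
def lostSet {V : Type*} [DecidableEq V] (bag : ℕ → Finset V) (a : ℕ) : Finset V :=
  bag a \ bag (a + 1)

/-- `(κ, A, B, Y)` enumerates, in order, all clusters `C_1, …, C_κ` of the
decomposition: `C_i` occupies bags `A i, …, B i` and has anchor-triplet `Y i`. -/
def IsClusterSeq {V : Type*} [DecidableEq V] (bag : ℕ → Finset V) (ξ κ : ℕ)
    (A B : ℕ → ℕ) (Y : ℕ → Finset V) : Prop :=
  (∀ i, 1 ≤ i → i ≤ κ → IsCluster bag ξ (A i) (B i) (Y i)) ∧
  (∀ i, 1 ≤ i → i < κ → A i < A (i + 1)) ∧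
  (∀ (a b : ℕ) (Z : Finset V), IsCluster bag ξ a b Z →
    ∃ i, 1 ≤ i ∧ i ≤ κ ∧ A i = a ∧ B i = b ∧ Y i = Z)

/-- Auxiliary: around any even bag `e` there is a (maximal) cluster, whose endpoints
are extremal among intervals on which `bag e` is contained in every bag. -/
lemma cluster_around {V : Type*} [DecidableEq V] (bag : ℕ → Finset V) (ξ e : ℕ)
    (he1 : 1 ≤ e) (he2 : e ≤ ξ) (heven : e % 2 = 0)
    (hcard3 : ∀ i, 1 ≤ i → i ≤ ξ → i % 2 = 0 → (bag i).card = 3) :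
    ∃ a b, IsCluster bag ξ a b (bag e) ∧
      (∀ j, 1 ≤ j → (∀ t, j ≤ t → t ≤ e → bag e ⊆ bag t) → a ≤ j) ∧
      (∀ j, j ≤ ξ → (∀ t, e ≤ t → t ≤ j → bag e ⊆ bag t) → j ≤ b) := by
  classical
  set Z := bag e with hZ
  have hex : ∃ a, 1 ≤ a ∧ ∀ t, a ≤ t → t ≤ e → Z ⊆ bag t := by
    refine ⟨e, he1, fun t h1 h2 => ?_⟩
    have : t = e := le_antisymm h2 h1
    simp [this, hZ]
  let a := Nat.find hex
  have hPa : 1 ≤ a ∧ ∀ t, a ≤ t → t ≤ e → Z ⊆ bag t := Nat.find_spec hex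
  have hamin : ∀ j, 1 ≤ j → (∀ t, j ≤ t → t ≤ e → Z ⊆ bag t) → a ≤ j :=
    fun j h1 h2 => Nat.find_min' hex ⟨h1, h2⟩
  have hae : a ≤ e := hamin e he1 (fun t h1 h2 => by
    have : t = e := le_antisymm h2 h1
    simp [this, hZ])
  let Q : ℕ → Prop := fun b => ∀ t, e ≤ t → t ≤ b → Z ⊆ bag t
  have hQe : Q e := fun t h1 h2 => by
    have : t = e := le_antisymm h2 h1
    simp [this, hZ]
  let b := Nat.findGreatest Q ξ
  have hQb : Q b := Nat.findGreatest_spec he2 hQe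
  have hbx : b ≤ ξ := Nat.findGreatest_le ξ
  have hmax : ∀ j, j ≤ ξ → Q j → j ≤ b := fun j h1 h2 => Nat.le_findGreatest h1 h2
  have heb : e ≤ b := hmax e he2 hQe
  refine ⟨a, b, ⟨hPa.1, le_trans hae heb, hbx, hcard3 e he1 he2 heven,
    ⟨e, hae, heb, rfl⟩, ?_, ?_, ?_⟩, hamin, hmax⟩
  · intro i h1 h2
    rcases le_or_gt i e with h | h
    · exact hPa.2 i h1 h
    · exact hQb i (le_of_lt h) h2
  · rcases Nat.eq_or_lt_of_le hPa.1 with h | h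
    · exact Or.inl h.symm
    · refine Or.inr (fun hcon => ?_)
      have hna : ¬ (1 ≤ a - 1 ∧ ∀ t, a - 1 ≤ t → t ≤ e → Z ⊆ bag t) :=
        Nat.find_min hex (by omega)
      apply hna
      refine ⟨by omega, fun t h1 h2 => ?_⟩
      rcases Nat.eq_or_lt_of_le h1 with h' | h'
      · rwa [← h']
      · exact hPa.2 t (by omega) h2
  · rcases Nat.eq_or_lt_of_le hbx with h | h
    · exact Or.inl h
    · refine Or.inr (fun hcon => ?_)
      have hnb : ¬ Q (b + 1) := Nat.findGreatest_is_greatest (Nat.lt_succ_self b) h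
      apply hnb
      intro t h1 h2
      rcases Nat.eq_or_lt_of_le h2 with h' | h'
      · rwa [h']
      · exact hQb t h1 (by omega)

/-- For a graph with an alternating width-3 path decomposition and
clusters C₁,…,C_κ: every vertex belongs to V(C_i) for some i; the anchor-triplets
satisfy T(C_{i+1}) = (T(C_i) ∪ {x⁺_i}) \ {x⁻_{i+1}} for 1 ≤ i < κ (with x⁺_i the
emerging vertex of C_i and x⁻_{i+1} the lost vertex of C_{i+1}); and consecutive
clusters share exactly one bag, which has size 4. -/
theorem stmt9 {V : Type*} [DecidableEq V] [Fintype V] (G : SimpleGraph V)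
    (bag : ℕ → Finset V) (ξ κ : ℕ) (A B : ℕ → ℕ) (Y : ℕ → Finset V)
    (hdec : IsAltPD3 G bag ξ) (hseq : IsClusterSeq bag ξ κ A B Y) :
    (∀ v : V, ∃ i, 1 ≤ i ∧ i ≤ κ ∧ v ∈ clusterVerts bag (A i) (B i)) ∧
    (∀ i, 1 ≤ i → i < κ →
      Y (i + 1) = (Y i ∪ emergeSet bag (B i)) \ lostSet bag (A (i + 1))) ∧
    (∀ i, 1 ≤ i → i < κ → A (i + 1) = B i ∧ (bag (B i)).card = 4) := by
  classical
  obtain ⟨hξ, hn, hcard4, hcard3, hsub, hedge, hconv, hall⟩ := hdec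
  obtain ⟨hcl, hinc, hcomp⟩ := hseq
  have hξ3 : 3 ≤ ξ := by omega
  have hξodd : ξ % 2 = 1 := by omega
  -- even bags inside a cluster are the anchor triple
  have hEB : ∀ {a b : ℕ} {Z : Finset V}, IsCluster bag ξ a b Z → ∀ t,
      a ≤ t → t ≤ b → t % 2 = 0 → bag t = Z := by
    intro a b Z hc t h1 h2 h3
    have h4 : (bag t).card = 3 := hcard3 t (le_trans hc.1 h1) (le_trans h2 hc.2.2.1) h3
    have h5 : Z.card = 3 := hc.2.2.2.1
    exact (Finset.eq_of_subset_of_card_le (hc.2.2.2.2.2.1 t h1 h2) (by omega)).symm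
  -- cluster endpoints are odd
  have hAodd : ∀ {a b : ℕ} {Z : Finset V}, IsCluster bag ξ a b Z → a % 2 = 1 := by
    intro a b Z hc
    by_contra h
    have ha0 : a % 2 = 0 := by omega
    have hba : bag a = Z := hEB hc a le_rfl hc.2.1 ha0
    have h1a : 1 < a := by have := hc.1; omega
    have haξ : a < ξ := by have h1 := hc.2.1; have h2 := hc.2.2.1; omega
    have hss := (hsub a h1a haξ ha0).1
    rcases hc.2.2.2.2.2.2.1 with h1 | hns
    · omega
    · exact hns (hba ▸ hss)
  have hBodd : ∀ {a b : ℕ} {Z : Finset V}, IsCluster bag ξ a b Z → b % 2 = 1 := by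
    intro a b Z hc
    by_contra h
    have hb0 : b % 2 = 0 := by omega
    have hba : bag b = Z := hEB hc b hc.2.1 le_rfl hb0
    have h1b : 1 < b := by have := hc.1; have := hc.2.1; omega
    have hbξ : b < ξ := by have := hc.2.2.1; omega
    have hss := (hsub b h1b hbξ hb0).2
    rcases hc.2.2.2.2.2.2.2 with h1 | hns
    · omega
    · exact hns (hba ▸ hss)
  -- clusters span at least 3 bags, and the bags next to the endpoints equal the anchor
  have hWit : ∀ {a b : ℕ} {Z : Finset V}, IsCluster bag ξ a b Z →
      a + 2 ≤ b ∧ bag (a + 1) = Z ∧ bag (b - 1) = Z := by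
    intro a b Z hc
    obtain ⟨i0, hi0a, hi0b, hi0eq⟩ := hc.2.2.2.2.1
    have hi0e : i0 % 2 = 0 := by
      by_contra h
      have h1 : i0 % 2 = 1 := by omega
      have h4 := hcard4 i0 (le_trans hc.1 hi0a) (le_trans hi0b hc.2.2.1) h1
      have h3 : Z.card = 3 := hc.2.2.2.1
      rw [hi0eq] at h4
      omega
    have hao := hAodd hc
    have hbo := hBodd hc
    have hab2 : a + 2 ≤ b := by omega
    exact ⟨hab2, hEB hc (a + 1) (by omega) (by omega) (by omega),
      hEB hc (b - 1) (by omega) (by omega) (by omega)⟩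
  -- two clusters sharing an even bag have the same left endpoint
  have hsameA : ∀ {a b a' b' : ℕ} {Z Z' : Finset V}, IsCluster bag ξ a b Z →
      IsCluster bag ξ a' b' Z' → ∀ t, a ≤ t → t ≤ b → a' ≤ t → t ≤ b' →
      t % 2 = 0 → a = a' := by
    intro a b a' b' Z Z' hc hc' t h1 h2 h3 h4 h5
    have hZZ : Z = Z' := by rw [← hEB hc t h1 h2 h5, hEB hc' t h3 h4 h5]
    rcases lt_trichotomy a a' with h | h | h
    · exfalso
      rcases hc'.2.2.2.2.2.2.1 with h1' | hns
      · have := hc.1; omega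
      · exact hns (hZZ ▸ hc.2.2.2.2.2.1 (a' - 1) (by omega) (by omega))
    · exact h
    · exfalso
      rcases hc.2.2.2.2.2.2.1 with h1' | hns
      · have := hc'.1; omega
      · exact hns (hZZ ▸ hc'.2.2.2.2.2.1 (a - 1) (by omega) (by omega))
  -- strict monotonicity of A and its converse
  have hmono : ∀ j i, 1 ≤ i → i < j → j ≤ κ → A i < A j := by
    intro j
    induction j with
    | zero => intro i h1 h2 h3; omega
    | succ m ih =>
      intro i h1 h2 h3
      rcases Nat.lt_or_ge i m with h | h
      · exact (ih i h1 h (by omega)).trans (hinc m (by omega) (by omega))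
      · have : i = m := by omega
        subst this
        exact hinc i h1 (by omega)
  have hltinv : ∀ i k, 1 ≤ i → 1 ≤ k → i ≤ κ → k ≤ κ → A i < A k → i < k := by
    intro i k h1 h2 h3 h4 h5
    by_contra h
    rcases Nat.lt_or_ge k i with h' | h'
    · have := hmono i k h2 h' h3; omega
    · have : k = i := by omega
      subst this; omega
  -- Goal 3
  have hG3 : ∀ i, 1 ≤ i → i < κ → A (i + 1) = B i ∧ (bag (B i)).card = 4 := by
    intro i hi1 hi2
    have hci := hcl i hi1 (by omega)
    have hci' := hcl (i + 1) (by omega) (by omega)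
    have haa : A i < A (i + 1) := hinc i hi1 hi2
    have hbo : B i % 2 = 1 := hBodd hci
    have hao' : A (i + 1) % 2 = 1 := hAodd hci'
    have hw := hWit hci
    have hw' := hWit hci'
    have hstep1 : B i ≤ A (i + 1) := by
      by_contra h
      have := hsameA hci hci' (A (i + 1) + 1) (by omega) (by omega) (by omega)
        (by omega) (by omega)
      omega
    have hstep2 : A (i + 1) ≤ B i := by
      by_contra h
      have hbξ : B i < ξ := by
        have h1 := hci'.2.1; have h2 := hci'.2.2.1; omega
      have hb1 : 1 ≤ B i := le_trans hci.1 hci.2.1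
      obtain ⟨a'', b'', hc'', hmin, hmax⟩ := cluster_around bag ξ (B i + 1)
        (by omega) (by omega) (by omega) hcard3
      have hbe : B i + 1 < ξ := by omega
      have hab : a'' ≤ B i := by
        refine hmin (B i) hb1 (fun t h1 h2 => ?_)
        rcases Nat.eq_or_lt_of_le h1 with h' | h'
        · have := (hsub (B i + 1) (by omega) hbe (by omega)).1
          simpa [← h'] using this
        · rw [show t = B i + 1 by omega]
      have heb'' : B i + 1 ≤ b'' := hmax (B i + 1) (by omega)
        (fun t h1 h2 => by rw [show t = B i + 1 from le_antisymm h2 h1])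
      have hab2 : B i ≤ a'' := by
        by_contra h'
        have hbm1 : bag (B i - 1) = Y i := hEB hci (B i - 1) (by have := hw.1; omega)
          (by omega) (by omega)
        have hss : bag (B i + 1) ⊆ bag (B i - 1) :=
          hc''.2.2.2.2.2.1 (B i - 1) (by omega) (by omega)
        rw [hbm1] at hss
        have hcY : (Y i).card = 3 := hci.2.2.2.1
        have hc3 : (bag (B i + 1)).card = 3 := hcard3 (B i + 1) (by omega) (by omega)
          (by omega)
        have heq : bag (B i + 1) = Y i := Finset.eq_of_subset_of_card_le hss (by omega)
        rcases hci.2.2.2.2.2.2.2 with h1' | hns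
        · omega
        · exact hns (heq ▸ Finset.Subset.refl _)
      have haB : a'' = B i := le_antisymm hab hab2
      obtain ⟨k, hk1, hk2, hkA, _, _⟩ := hcomp a'' b'' _ hc''
      have h1 : i < k := hltinv i k hi1 hk1 (by omega) hk2 (by omega)
      have h2 : k < i + 1 := hltinv k (i + 1) hk1 (by omega) hk2 (by omega) (by omega)
      omega
    have hAB : A (i + 1) = B i := le_antisymm hstep2 hstep1
    exact ⟨hAB, hcard4 (B i) (le_trans hci.1 hci.2.1) hci.2.2.1 hbo⟩
  -- Goal 2
  have hG2 : ∀ i, 1 ≤ i → i < κ →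
      Y (i + 1) = (Y i ∪ emergeSet bag (B i)) \ lostSet bag (A (i + 1)) := by
    intro i hi1 hi2
    obtain ⟨hAB, hc4⟩ := hG3 i hi1 hi2
    have hci := hcl i hi1 (by omega)
    have hci' := hcl (i + 1) (by omega) (by omega)
    have hbo : B i % 2 = 1 := hBodd hci
    have hw := hWit hci
    have hw' := hWit hci'
    have hb1 : bag (B i - 1) = Y i := hw.2.2
    have hb2 : bag (B i + 1) = Y (i + 1) := by
      have := hw'.2.1
      rwa [hAB] at this
    have hY1b : Y i ⊆ bag (B i) := hci.2.2.2.2.2.1 (B i) hci.2.1 le_rfl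
    have hY2b : Y (i + 1) ⊆ bag (B i) := by
      have := hci'.2.2.2.2.2.1 (A (i + 1)) le_rfl hci'.2.1
      rwa [hAB] at this
    rw [emergeSet, lostSet, hb1, hAB, hb2, Finset.union_sdiff_of_subset hY1b,
      Finset.sdiff_sdiff_eq_self hY2b]
  refine ⟨?_, hG2, hG3⟩
  intro v
  obtain ⟨j, hj1, hj2, hjv⟩ := hall v
  have key : ∃ a b Z, IsCluster bag ξ a b Z ∧ a ≤ j ∧ j ≤ b := by
    by_cases hje : j % 2 = 0
    · obtain ⟨a, b, hc, hmin, hmax⟩ := cluster_around bag ξ j hj1 hj2 hje hcard3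
      refine ⟨a, b, bag j, hc, ?_, ?_⟩
      · exact hmin j hj1 (fun t h1 h2 => by rw [show t = j from le_antisymm h2 h1])
      · exact hmax j hj2 (fun t h1 h2 => by rw [show t = j from le_antisymm h2 h1])
    · by_cases hjξ : j < ξ
      · obtain ⟨a, b, hc, hmin, hmax⟩ := cluster_around bag ξ (j + 1) (by omega)
          (by omega) (by omega) hcard3
        refine ⟨a, b, bag (j + 1), hc, ?_, ?_⟩
        · refine hmin j hj1 (fun t h1 h2 => ?_)
          rcases Nat.eq_or_lt_of_le h1 with h' | h'
          · have hje1 : j + 1 < ξ := by omega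
            have := (hsub (j + 1) (by omega) hje1 (by omega)).1
            simpa [← h'] using this
          · rw [show t = j + 1 by omega]
        · have := hmax (j + 1) (by omega)
            (fun t h1 h2 => by rw [show t = j + 1 from le_antisymm h2 h1])
          omega
      · have hjξ' : j = ξ := by omega
        obtain ⟨a, b, hc, hmin, hmax⟩ := cluster_around bag ξ (ξ - 1) (by omega)
          (by omega) (by omega) hcard3
        refine ⟨a, b, bag (ξ - 1), hc, ?_, ?_⟩
        · have := hmin (ξ - 1) (by omega)
            (fun t h1 h2 => by rw [show t = ξ - 1 from le_antisymm h2 h1])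
          omega
        · refine le_trans (le_of_eq hjξ') (hmax ξ le_rfl (fun t h1 h2 => ?_))
          rcases Nat.eq_or_lt_of_le h2 with h' | h'
          · have := (hsub (ξ - 1) (by omega) (by omega) (by omega)).2
            have hx : ξ - 1 + 1 = ξ := by omega
            rw [hx] at this
            rwa [h']
          · rw [show t = ξ - 1 by omega]
  obtain ⟨a, b, Z, hc, h1, h2⟩ := key
  obtain ⟨k, hk1, hk2, hkA, hkB, _⟩ := hcomp a b Z hc
  refine ⟨k, hk1, hk2, ?_⟩
  rw [hkA, hkB]
  exact Finset.mem_biUnion.2 ⟨j, Finset.mem_Icc.2 ⟨h1, h2⟩, hjv⟩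
end

section
/- Let G be a graph with an alternating width-3 path decomposition with clusters C₁,…,C_κ. A singleton of cluster C_i is a vertex of V(C_i) not in T(C_i) ∪ {x⁺_i, x⁻_i}. Then every singleton of C_i occurs in exactly one bag of the decomposition, and that bag belongs only to C_i (to no other cluster). Consequently each cluster C_i has exactly |V(C_i)| - 5 singletons. -/
/-- A singleton of cluster C_i is a vertex of V(C_i) not in
T(C_i) ∪ {x⁺_i, x⁻_i}. Every singleton of C_i occurs in exactly one bag of the
decomposition, that bag belongs to C_i and to no other cluster, and each cluster C_i
has exactly |V(C_i)| - 5 singletons. -/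
theorem stmt10 {V : Type*} [DecidableEq V] [Fintype V] (G : SimpleGraph V)
    (bag : ℕ → Finset V) (ξ κ : ℕ) (A B : ℕ → ℕ) (Y : ℕ → Finset V)
    (hdec : IsAltPD3 G bag ξ) (hseq : IsClusterSeq bag ξ κ A B Y) :
    ∀ i, 1 ≤ i → i ≤ κ →
      (∀ v ∈ clusterVerts bag (A i) (B i) \ (Y i ∪ emergeSet bag (B i) ∪ lostSet bag (A i)),
        (∃! j, 1 ≤ j ∧ j ≤ ξ ∧ v ∈ bag j) ∧
        (∀ j, 1 ≤ j → j ≤ ξ → v ∈ bag j →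
          (A i ≤ j ∧ j ≤ B i) ∧
          ∀ i', 1 ≤ i' → i' ≤ κ → i' ≠ i → ¬ (A i' ≤ j ∧ j ≤ B i'))) ∧
      (clusterVerts bag (A i) (B i) \ (Y i ∪ emergeSet bag (B i) ∪ lostSet bag (A i))).card
        = (clusterVerts bag (A i) (B i)).card - 5 := by

  obtain ⟨hξ, hn, hodd4, heven3, hsub, hedge, hconv, hall⟩ := hdec
  obtain ⟨hmem, hmono, hmax⟩ := hseq
  have hξodd : ξ % 2 = 1 := by omega
  have hAmono : ∀ p q, 1 ≤ p → p < q → q ≤ κ → A p < A q := by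
    intro p q hp
    induction q with
    | zero => intro h _; omega
    | succ n ih =>
      intro hpq hq
      rcases Nat.lt_or_ge p n with h | h
      · exact lt_trans (ih (by omega) (by omega)) (hmono n (by omega) (by omega))
      · have hpn : p = n := by omega
        subst hpn
        exact hmono p hp (by omega)
  intro i hi1 hiκ
  obtain ⟨ha1, hab, hbξ, hY3, ⟨e0, he0a, he0b, he0Y⟩, hYsub, hmaxa, hmaxb⟩ :=
    hmem i hi1 hiκ
  -- every even bag of the cluster equals the anchor triplet
  have heven : ∀ e, A i ≤ e → e ≤ B i → e % 2 = 0 → bag e = Y i := by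
    intro e hea heb hep
    have hc3 : (bag e).card = 3 := heven3 e (le_trans ha1 hea) (le_trans heb hbξ) hep
    exact (Finset.eq_of_subset_of_card_le (hYsub e hea heb) (by omega)).symm
  -- the first bag index is odd
  have haodd : A i % 2 = 1 := by
    by_contra h
    have hpe : A i % 2 = 0 := by omega
    have hsa := (hsub (A i) (by omega) (by omega) hpe).1
    rw [heven (A i) le_rfl hab hpe] at hsa
    rcases hmaxa with h1 | h1
    · omega
    · exact h1 hsa
  -- the last bag index is odd
  have hbodd : B i % 2 = 1 := by
    by_contra h
    have hpe : B i % 2 = 0 := by omega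
    have hsb := (hsub (B i) (by omega) (by omega) hpe).2
    rw [heven (B i) hab le_rfl hpe] at hsb
    rcases hmaxb with h1 | h1
    · omega
    · exact h1 hsb
  -- the cluster spans at least three bags
  have hab2 : A i + 2 ≤ B i := by
    have he0odd : e0 % 2 = 0 := by
      by_contra h
      have h4 : (bag e0).card = 4 :=
        hodd4 e0 (le_trans ha1 he0a) (le_trans he0b hbξ) (by omega)
      rw [he0Y, hY3] at h4
      omega
    omega
  -- odd bags consist of the anchor plus one extra vertex
  have hodddiff : ∀ j, A i ≤ j → j ≤ B i → j % 2 = 1 → (bag j \ Y i).card = 1 := by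
    intro j hja hjb hjo
    have h4 : (bag j).card = 4 := hodd4 j (le_trans ha1 hja) (le_trans hjb hbξ) hjo
    rw [Finset.card_sdiff_of_subset (hYsub j hja hjb), h4, hY3]
  -- a vertex of a strictly interior bag which is not in the anchor occurs only there
  have huniq : ∀ j, A i < j → j < B i → ∀ v, v ∈ bag j → v ∉ Y i →
      ∀ k, 1 ≤ k → k ≤ ξ → v ∈ bag k → k = j := by
    intro j hja hjb v hvj hvY k hk1 hkξ hvk
    by_contra hne
    have hjodd : j % 2 = 1 := by
      by_contra h
      rw [heven j (le_of_lt hja) (le_of_lt hjb) (by omega)] at hvj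
      exact hvY hvj
    rcases Nat.lt_or_ge k j with hlt | hge
    · have hmid : v ∈ bag (j - 1) :=
        hconv v k j (j - 1) hk1 (le_trans (le_of_lt hjb) hbξ) (by omega) (by omega) hvk hvj
      rw [heven (j - 1) (by omega) (by omega) (by omega)] at hmid
      exact hvY hmid
    · have hmid : v ∈ bag (j + 1) :=
        hconv v j k (j + 1) (by omega) hkξ (by omega) (by omega) hvj hvk
      rw [heven (j + 1) (by omega) (by omega) (by omega)] at hmid
      exact hvY hmid
  have hba1 : bag (A i + 1) = Y i := heven (A i + 1) (by omega) (by omega) (by omega)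
  have hbb1 : bag (B i - 1) = Y i := heven (B i - 1) (by omega) (by omega) (by omega)
  refine ⟨?_, ?_⟩
  · -- part 1: each singleton occurs in exactly one bag, belonging only to C_i
    intro v hv
    rw [Finset.mem_sdiff] at hv
    obtain ⟨hvC, hvT⟩ := hv
    simp only [Finset.mem_union, not_or] at hvT
    obtain ⟨⟨hvY, hvE⟩, hvL⟩ := hvT
    obtain ⟨j, hjI, hvj⟩ := Finset.mem_biUnion.1 hvC
    rw [Finset.mem_Icc] at hjI
    obtain ⟨hja, hjb⟩ := hjI
    have hjodd : j % 2 = 1 := by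
      by_contra h
      rw [heven j hja hjb (by omega)] at hvj
      exact hvY hvj
    have hjna : j ≠ A i := by
      intro h
      subst h
      refine hvL ?_
      simp only [lostSet]
      exact Finset.mem_sdiff.2 ⟨hvj, by rw [hba1]; exact hvY⟩
    have hjnb : j ≠ B i := by
      intro h
      subst h
      refine hvE ?_
      simp only [emergeSet]
      exact Finset.mem_sdiff.2 ⟨hvj, by rw [hbb1]; exact hvY⟩
    have hja' : A i < j := lt_of_le_of_ne hja (Ne.symm hjna)
    have hjb' : j < B i := lt_of_le_of_ne hjb hjnb
    refine ⟨⟨j, ⟨by omega, le_trans hjb hbξ, hvj⟩, ?_⟩, ?_⟩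
    · intro k hk
      exact huniq j hja' hjb' v hvj hvY k hk.1 hk.2.1 hk.2.2
    · intro j' hj'1 hj'ξ hvj'
      have hj'j : j' = j := huniq j hja' hjb' v hvj hvY j' hj'1 hj'ξ hvj'
      rw [hj'j]
      refine ⟨⟨hja, hjb⟩, ?_⟩
      intro i' hi'1 hi'κ hi'ne hcc
      obtain ⟨hji'a, hji'b⟩ := hcc
      obtain ⟨ha1', hab', hbξ', hY3', ⟨e', he'a, he'b, he'Y⟩, hYsub', hmaxa', hmaxb'⟩ :=
        hmem i' hi'1 hi'κ
      by_cases hvY' : v ∈ Y i'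
      · -- then v would be in the anchor bag of C_{i'}, a second occurrence
        have hve' : v ∈ bag e' := by rw [he'Y]; exact hvY'
        have he'j : e' = j :=
          huniq j hja' hjb' v hvj hvY e' (le_trans ha1' he'a) (le_trans he'b hbξ') hve'
        have h4 : (bag j).card = 4 := hodd4 j (by omega) (le_trans hjb hbξ) hjodd
        rw [← he'j, he'Y, hY3'] at h4
        omega
      · -- then the anchors coincide, so the clusters coincide by maximality
        have hYY : Y i' = Y i := by
          have hsubj : Y i' ⊆ bag j := hYsub' j hji'a hji'b
          have h1 : (bag j \ Y i).card = 1 := hodddiff j hja hjb hjodd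
          obtain ⟨w, hw⟩ := Finset.card_eq_one.1 h1
          have hvw : v = w := by
            have : v ∈ bag j \ Y i := Finset.mem_sdiff.2 ⟨hvj, hvY⟩
            rw [hw, Finset.mem_singleton] at this
            exact this
          have hsubY : Y i' ⊆ Y i := by
            intro x hx
            by_contra hxY
            have hxd : x ∈ bag j \ Y i := Finset.mem_sdiff.2 ⟨hsubj hx, hxY⟩
            rw [hw, Finset.mem_singleton] at hxd
            subst hxd
            exact hvY' (hvw ▸ hx)
          exact Finset.eq_of_subset_of_card_le hsubY (by omega)
        have haa : A i' = A i := by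
          rcases Nat.lt_trichotomy (A i') (A i) with h | h | h
          · have hY' : Y i ⊆ bag (A i - 1) := by
              rw [← hYY]
              exact hYsub' (A i - 1) (by omega) (by omega)
            rcases hmaxa with h2 | h2
            · omega
            · exact absurd hY' h2
          · exact h
          · have hY' : Y i' ⊆ bag (A i' - 1) := by
              rw [hYY]
              exact hYsub (A i' - 1) (by omega) (by omega)
            rcases hmaxa' with h2 | h2
            · omega
            · exact absurd hY' h2
        rcases Nat.lt_trichotomy i i' with h | h | h
        · have := hAmono i i' hi1 h hi'κ; omega
        · exact hi'ne h.symm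
        · have := hAmono i' i hi'1 h hiκ; omega
  · -- part 2: cardinality count
    have hEeq : emergeSet bag (B i) = bag (B i) \ Y i := by
      simp only [emergeSet]
      rw [hbb1]
    have hLeq : lostSet bag (A i) = bag (A i) \ Y i := by
      simp only [lostSet]
      rw [hba1]
    have hE1 : (emergeSet bag (B i)).card = 1 := by
      rw [hEeq]; exact hodddiff (B i) (by omega) le_rfl hbodd
    have hL1 : (lostSet bag (A i)).card = 1 := by
      rw [hLeq]; exact hodddiff (A i) le_rfl (by omega) haodd
    have hsubC : ∀ j, A i ≤ j → j ≤ B i → bag j ⊆ clusterVerts bag (A i) (B i) := by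
      intro j h1 h2 x hx
      exact Finset.mem_biUnion.2 ⟨j, Finset.mem_Icc.2 ⟨h1, h2⟩, hx⟩
    have hTsub : Y i ∪ emergeSet bag (B i) ∪ lostSet bag (A i) ⊆
        clusterVerts bag (A i) (B i) := by
      intro x hx
      rcases Finset.mem_union.1 hx with hx | hx
      · rcases Finset.mem_union.1 hx with hx | hx
        · exact hsubC (A i) le_rfl (by omega) (hYsub (A i) le_rfl (by omega) hx)
        · rw [hEeq] at hx
          exact hsubC (B i) (by omega) le_rfl (Finset.mem_sdiff.1 hx).1
      · rw [hLeq] at hx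
        exact hsubC (A i) le_rfl (by omega) (Finset.mem_sdiff.1 hx).1
    have hdisj1 : Disjoint (Y i) (emergeSet bag (B i)) := by
      rw [hEeq]; exact Finset.disjoint_sdiff
    have hdisjYL : Disjoint (Y i) (lostSet bag (A i)) := by
      rw [hLeq]; exact Finset.disjoint_sdiff
    have hdisjEL : Disjoint (emergeSet bag (B i)) (lostSet bag (A i)) := by
      rw [hEeq, hLeq, Finset.disjoint_left]
      intro x hxE hxL
      obtain ⟨hxb, hxY⟩ := Finset.mem_sdiff.1 hxE
      obtain ⟨hxa, -⟩ := Finset.mem_sdiff.1 hxL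
      have hmid : x ∈ bag (A i + 1) :=
        hconv x (A i) (B i) (A i + 1) ha1 hbξ (by omega) (by omega) hxa hxb
      rw [hba1] at hmid
      exact hxY hmid
    have hd2 : Disjoint (Y i ∪ emergeSet bag (B i)) (lostSet bag (A i)) :=
      Finset.disjoint_union_left.2 ⟨hdisjYL, hdisjEL⟩
    have hcardT : (Y i ∪ emergeSet bag (B i) ∪ lostSet bag (A i)).card = 5 := by
      rw [Finset.card_union_of_disjoint hd2, Finset.card_union_of_disjoint hdisj1,
        hY3, hE1, hL1]
    rw [Finset.card_sdiff_of_subset hTsub, hcardT]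
end

section
/- Let G be a 3-traceable graph (a graph with an alternating width-3 path decomposition in which every non-anchor vertex has degree at least 3 and every edge (x⁺_{i-1}, x⁻_i) exists for 1 ≤ i ≤ κ). Then for all 1 ≤ i < j ≤ κ there exist three pairwise vertex-disjoint paths from T(C_i) to T(C_j) in G, each path either a single vertex (a vertex common to both triplets) or consisting exactly of edges of the form (x⁺_{k-1}, x⁻_k) for i < k ≤ j. -/
/-- A non-anchor vertex: one that occurs in exactly one bag of the decomposition. -/
def NonAnchor {V : Type*} [DecidableEq V] (bag : ℕ → Finset V) (ξ : ℕ) (v : V) : Prop :=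
  ((Finset.Icc 1 ξ).filter (fun j => v ∈ bag j)).card = 1

/-- A 3-traceable graph: a graph with an alternating width-3 path decomposition
(with clusters C₁,…,C_κ) in which every non-anchor vertex has degree at least 3 and
every edge (x⁺_{i-1}, x⁻_i) exists, for 2 ≤ i ≤ κ. -/
def IsThreeTraceable {V : Type*} [DecidableEq V] [Fintype V] (G : SimpleGraph V)
    [DecidableRel G.Adj] (bag : ℕ → Finset V) (ξ κ : ℕ) (A B : ℕ → ℕ)
    (Y : ℕ → Finset V) : Prop :=
  IsAltPD3 G bag ξ ∧ IsClusterSeq bag ξ κ A B Y ∧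
  (∀ v : V, NonAnchor bag ξ v → 3 ≤ G.degree v) ∧
  (∀ i, 2 ≤ i → i ≤ κ →
    ∀ u ∈ emergeSet bag (B (i - 1)), ∀ w ∈ lostSet bag (A i), G.Adj u w)

set_option linter.unusedSectionVars false

section AuxLemmas

variable {V : Type*} [DecidableEq V] [Fintype V] {G : SimpleGraph V}
  {bag : ℕ → Finset V} {ξ κ : ℕ} {A B : ℕ → ℕ} {Y : ℕ → Finset V}

lemma A_strict (hcs : IsClusterSeq bag ξ κ A B Y) :
    ∀ {m k : ℕ}, 1 ≤ m → m < k → k ≤ κ → A m < A k := by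
  intro m k
  induction k with
  | zero => intro _ h _; omega
  | succ n ih =>
    intro h1 hmk hk
    rcases Nat.lt_or_ge m n with h | h
    · exact lt_trans (ih h1 h (by omega)) (hcs.2.1 n (by omega) (by omega))
    · have hm : m = n := by omega
      subst hm
      exact hcs.2.1 m h1 (by omega)

lemma cluster_core {a b : ℕ} {Z : Finset V} (hpd : IsAltPD3 G bag ξ)
    (hc : IsCluster bag ξ a b Z) : ∃ e, a ≤ e ∧ e ≤ b ∧ bag e = Z ∧ e % 2 = 0 := by
  obtain ⟨ha, hab, hb, hcard, ⟨e, he1, he2, hbe⟩, _⟩ := hc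
  refine ⟨e, he1, he2, hbe, ?_⟩
  by_contra hodd
  have h2 : e % 2 = 1 := by omega
  have h4 := hpd.2.2.1 e (by omega) (by omega) h2
  rw [hbe, hcard] at h4
  omega

lemma core_not_shared {a' b' : ℕ} {Z Z' : Finset V}
    (hc' : IsCluster bag ξ a' b' Z') (hne : Z ≠ Z') {e : ℕ} (hbe : bag e = Z)
    (hZ : Z.card = 3) (h1 : a' ≤ e) (h2 : e ≤ b') : False := by
  have hsub : Z' ⊆ Z := hbe ▸ hc'.2.2.2.2.2.1 e h1 h2
  have heq := Finset.eq_of_subset_of_card_le hsub (by rw [hZ, hc'.2.2.2.1])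
  exact hne heq.symm

lemma overlap_bag {a b a' b' : ℕ} {Z Z' : Finset V} (hpd : IsAltPD3 G bag ξ)
    (hc : IsCluster bag ξ a b Z) (hc' : IsCluster bag ξ a' b' Z')
    (hne : Z ≠ Z') {t : ℕ} (h1 : a ≤ t) (h2 : t ≤ b) (h3 : a' ≤ t) (h4 : t ≤ b') :
    bag t = Z ∪ Z' ∧ t % 2 = 1 := by
  have hZ3 := hc.2.2.2.1
  have hZ'3 := hc'.2.2.2.1
  have hsub : Z ∪ Z' ⊆ bag t :=
    Finset.union_subset (hc.2.2.2.2.2.1 t h1 h2) (hc'.2.2.2.2.2.1 t h3 h4)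
  have hcup : 4 ≤ (Z ∪ Z').card := by
    by_contra h
    have h3le : (Z ∪ Z').card ≤ Z.card := by omega
    have heq := Finset.eq_of_subset_of_card_le Finset.subset_union_left h3le
    have hZ'Z : Z' ⊆ Z := by rw [heq]; exact Finset.subset_union_right
    exact hne (Finset.eq_of_subset_of_card_le hZ'Z (by omega)).symm
  have ht1 : 1 ≤ t := le_trans hc.1 h1
  have htξ : t ≤ ξ := le_trans h2 hc.2.2.1
  have hodd : t % 2 = 1 := by
    by_contra h
    have h0 : t % 2 = 0 := by omega
    have hc3 := hpd.2.2.2.1 t ht1 htξ h0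
    have := Finset.card_le_card hsub
    omega
  have h4' := hpd.2.2.1 t ht1 htξ hodd
  exact ⟨(Finset.eq_of_subset_of_card_le hsub (by omega)).symm, hodd⟩

lemma exists_cluster_around (hpd : IsAltPD3 G bag ξ) (e : ℕ) (he1 : 1 ≤ e)
    (heξ : e ≤ ξ) (hee : e % 2 = 0) :
    ∃ a b, IsCluster bag ξ a b (bag e) ∧ a ≤ e ∧ e ≤ b := by
  classical
  set S : Finset ℕ := (Finset.Icc 1 e).filter
    (fun t => ∀ s, t ≤ s → s ≤ e → bag e ⊆ bag s) with hSdef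
  have heS : e ∈ S := by
    simp only [hSdef, Finset.mem_filter, Finset.mem_Icc]
    exact ⟨⟨he1, le_rfl⟩, fun s hs hs' => by
      have : s = e := le_antisymm hs' hs
      rw [this]⟩
  set T : Finset ℕ := (Finset.Icc e ξ).filter
    (fun t => ∀ s, e ≤ s → s ≤ t → bag e ⊆ bag s) with hTdef
  have heT : e ∈ T := by
    simp only [hTdef, Finset.mem_filter, Finset.mem_Icc]
    exact ⟨⟨le_rfl, heξ⟩, fun s hs hs' => by
      have : s = e := le_antisymm hs' hs
      rw [this]⟩
  set a := S.min' ⟨e, heS⟩ with hadef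
  set b := T.max' ⟨e, heT⟩ with hbdef
  have haS : a ∈ S := Finset.min'_mem _ _
  have hbT : b ∈ T := Finset.max'_mem _ _
  simp only [hSdef, Finset.mem_filter, Finset.mem_Icc] at haS
  simp only [hTdef, Finset.mem_filter, Finset.mem_Icc] at hbT
  obtain ⟨⟨ha1, hae⟩, hPa⟩ := haS
  obtain ⟨⟨heb, hbξ⟩, hPb⟩ := hbT
  refine ⟨a, b, ⟨ha1, le_trans hae heb, hbξ, hpd.2.2.2.1 e he1 heξ hee,
    ⟨e, hae, heb, rfl⟩, ?_, ?_, ?_⟩, hae, heb⟩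
  · intro i hai hib
    rcases le_total i e with h | h
    · exact hPa i hai h
    · exact hPb i h hib
  · by_cases h1 : a = 1
    · exact Or.inl h1
    · refine Or.inr fun hsub => ?_
      have hmem : a - 1 ∈ S := by
        simp only [hSdef, Finset.mem_filter, Finset.mem_Icc]
        refine ⟨⟨by omega, by omega⟩, fun s hs hs' => ?_⟩
        rcases Nat.lt_or_ge s a with h | h
        · have : s = a - 1 := by omega
          rw [this]; exact hsub
        · exact hPa s h hs'
      have := Finset.min'_le S _ hmem
      omega
  · by_cases h1 : b = ξ
    · exact Or.inl h1
    · refine Or.inr fun hsub => ?_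
      have hmem : b + 1 ∈ T := by
        simp only [hTdef, Finset.mem_filter, Finset.mem_Icc]
        refine ⟨⟨by omega, by omega⟩, fun s hs hs' => ?_⟩
        rcases Nat.lt_or_ge b s with h | h
        · have : s = b + 1 := by omega
          rw [this]; exact hsub
        · exact hPb s hs h
      have := Finset.le_max' T _ hmem
      omega

end AuxLemmas

set_option linter.unusedSectionVars false

section ConsecLemma

variable {V : Type*} [DecidableEq V] [Fintype V] {G : SimpleGraph V}
  {bag : ℕ → Finset V} {ξ κ : ℕ} {A B : ℕ → ℕ} {Y : ℕ → Finset V}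

lemma consec (hpd : IsAltPD3 G bag ξ) (hcs : IsClusterSeq bag ξ κ A B Y)
    {k : ℕ} (hk1 : 1 ≤ k) (hkκ : k < κ) :
    A (k+1) = B k ∧ B k % 2 = 1 ∧ A k < B k ∧ A (k+1) < B (k+1) ∧
    bag (B k) = Y k ∪ Y (k+1) ∧ bag (B k - 1) = Y k ∧ bag (B k + 1) = Y (k+1) := by
  have hck := hcs.1 k hk1 (le_of_lt hkκ)
  have hck1 := hcs.1 (k+1) (by omega) hkκ
  obtain ⟨hak1, hakbk, hbkξ, hYk3, hcorek, hYksub, hmaxlk, hmaxrk⟩ := id hck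
  obtain ⟨ha1, hab1, hb1ξ, hY13, hcore1, hY1sub, hmaxl1, hmaxr1⟩ := id hck1
  have hAA : A k < A (k+1) := hcs.2.1 k hk1 hkκ
  have hξodd : ξ % 2 = 1 := by
    have h1 := hpd.1
    have h2 := hpd.2.1
    omega
  -- A (k+1) ≤ B k
  have hlt : A (k+1) ≤ B k := by
    by_contra hgt
    push_neg at hgt
    have hBkξ : B k < ξ := by
      have : A (k+1) ≤ ξ := le_trans hab1 hb1ξ
      omega
    by_cases hp : B k % 2 = 0
    · -- B k even: contradicts right-maximality of cluster k
      have h1 : 1 < B k := by omega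
      have hcard := hpd.2.2.2.1 (B k) (by omega) (le_of_lt hBkξ) hp
      have hbagBk : bag (B k) = Y k :=
        (Finset.eq_of_subset_of_card_le (hYksub (B k) hakbk le_rfl) (by omega)).symm
      have hsubnb := (hpd.2.2.2.2.1 (B k) h1 hBkξ hp).2
      rcases hmaxrk with h | h
      · omega
      · exact h (by rw [← hbagBk]; exact hsubnb)
    · rcases eq_or_lt_of_le (Nat.succ_le_of_lt hgt) with heq | hgt2
      · -- A (k+1) = B k + 1, so A (k+1) is even
        have hp1 : A (k+1) % 2 = 0 := by omega
        have h1 : 1 < A (k+1) := by omega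
        have hξ' : A (k+1) < ξ := by
          have : A (k+1) ≤ ξ := le_trans hab1 hb1ξ
          omega
        have hcard := hpd.2.2.2.1 (A (k+1)) (by omega) (le_of_lt hξ') hp1
        have hbagA : bag (A (k+1)) = Y (k+1) :=
          (Finset.eq_of_subset_of_card_le (hY1sub (A (k+1)) le_rfl hab1) (by omega)).symm
        have hsubnb := (hpd.2.2.2.2.1 (A (k+1)) h1 hξ' hp1).1
        rcases hmaxl1 with h | h
        · omega
        · exact h (by rw [← hbagA]; exact hsubnb)
      · -- gap of length ≥ 2: take even bag e = B k + 1 strictly inside the gap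
        have hee : (B k + 1) % 2 = 0 := by omega
        obtain ⟨a', b', hc', ha'e, heb'⟩ :=
          exists_cluster_around hpd (B k + 1) (by omega) (by omega) hee
        obtain ⟨m, hm1, hmκ, hAm, hBm, hYm⟩ := hcs.2.2 a' b' (bag (B k + 1)) hc'
        have hcm := hcs.1 m hm1 hmκ
        rcases lt_trichotomy m k with hmk | rfl | hkm
        · have hAmAk : A m < A k := A_strict hcs hm1 hmk (le_of_lt hkκ)
          by_cases hYY : Y m = Y k
          · have hsubm : Y m ⊆ bag (B k + 1) :=
              hcm.2.2.2.2.2.1 (B k + 1) (by omega) (by omega)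
            rcases hmaxrk with h | h
            · omega
            · exact h (hYY ▸ hsubm)
          · obtain ⟨e', he'1, he'2, hbe', he'par⟩ := cluster_core hpd hck
            exact core_not_shared hcm (fun h => hYY h.symm) hbe' hYk3 (by omega) (by omega)
        · omega
        · have hle' : A (k+1) ≤ A m := by
            rcases eq_or_lt_of_le (Nat.succ_le_of_lt hkm) with h | h
            · exact le_of_eq (congrArg A h)
            · exact le_of_lt (A_strict hcs (by omega) h hmκ)
          omega
  -- Y k ≠ Y (k+1)
  have hYne : Y k ≠ Y (k+1) := by
    intro heq
    rcases hmaxl1 with h | h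
    · omega
    · exact h (by rw [← heq]; exact hYksub (A (k+1) - 1) (by omega) (by omega))
  -- A (k+1) < B (k+1)
  have hA1B1 : A (k+1) < B (k+1) := by
    rcases lt_or_eq_of_le hab1 with h | h
    · exact h
    · exfalso
      obtain ⟨e', he'1, he'2, hbe', he'par⟩ := cluster_core hpd hck1
      exact core_not_shared hck (fun hh => hYne hh.symm) hbe' hY13 (by omega) (by omega)
  -- A (k+1) = B k
  have hAB : A (k+1) = B k := by
    rcases lt_or_eq_of_le hlt with h | h
    · exfalso
      have o1 := overlap_bag hpd hck hck1 hYne (t := A (k+1))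
        (le_of_lt hAA) (le_of_lt h) le_rfl (le_of_lt hA1B1)
      have o2 := overlap_bag hpd hck hck1 hYne (t := A (k+1) + 1)
        (by omega) (by omega) (by omega) (by omega)
      omega
    · exact h
  have o := overlap_bag hpd hck hck1 hYne (t := B k) hakbk le_rfl
    (by omega) (by omega)
  obtain ⟨hbagU, hBodd⟩ := o
  -- A k < B k
  have hAkBk : A k < B k := by
    obtain ⟨e', he'1, he'2, hbe', he'par⟩ := cluster_core hpd hck
    rcases lt_or_eq_of_le hakbk with h | h
    · exact h
    · omega
  -- bag (B k - 1) = Y k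
  have hbagm : bag (B k - 1) = Y k := by
    have hpar : (B k - 1) % 2 = 0 := by omega
    have hcard := hpd.2.2.2.1 (B k - 1) (by omega) (by omega) hpar
    exact (Finset.eq_of_subset_of_card_le (hYksub (B k - 1) (by omega) (by omega))
      (by omega)).symm
  -- bag (B k + 1) = Y (k+1)
  have hbagp : bag (B k + 1) = Y (k+1) := by
    have hpar : (B k + 1) % 2 = 0 := by omega
    have hcard := hpd.2.2.2.1 (B k + 1) (by omega) (by omega) hpar
    exact (Finset.eq_of_subset_of_card_le (hY1sub (B k + 1) (by omega) (by omega))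
      (by omega)).symm
  exact ⟨hAB, hBodd, hAkBk, hA1B1, hbagU, hbagm, hbagp⟩

end ConsecLemma

section TypeII

variable {V : Type*} [DecidableEq V] [Fintype V] {G : SimpleGraph V}
  {bag : ℕ → Finset V} {ξ κ : ℕ} {A B : ℕ → ℕ} {Y : ℕ → Finset V}

lemma typeII (hpd : IsAltPD3 G bag ξ) (hcs : IsClusterSeq bag ξ κ A B Y)
    (hadj : ∀ i, 2 ≤ i → i ≤ κ →
      ∀ u ∈ emergeSet bag (B (i - 1)), ∀ w ∈ lostSet bag (A i), G.Adj u w)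
    {k : ℕ} (hk1 : 1 ≤ k) (hkκ : k < κ) :
    ∃ u w, u ∈ Y (k+1) ∧ w ∈ Y k ∧ (∀ v ∈ Y k, v ≠ w → v ∈ Y (k+1)) ∧ G.Adj u w ∧
      u ∈ emergeSet bag (B k) ∧ w ∈ lostSet bag (A (k+1)) ∧
      (∀ t, 1 ≤ t → t < B k → u ∉ bag t) ∧ A k < B k ∧ A (k+1) = B k ∧
      u ∈ bag (A (k+1)) := by
  obtain ⟨hAB, hBodd, hAkBk, hA1B1, hbagU, hbagm, hbagp⟩ := consec hpd hcs hk1 hkκ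
  have hck := hcs.1 k hk1 (le_of_lt hkκ)
  have hck1 := hcs.1 (k+1) (by omega) hkκ
  have hYk3 : (Y k).card = 3 := hck.2.2.2.1
  have hY13 : (Y (k+1)).card = 3 := hck1.2.2.2.1
  have hbkξ : B k ≤ ξ := hck.2.2.1
  have hak1 : 1 ≤ A k := hck.1
  have hcard4 : (bag (B k)).card = 4 := hpd.2.2.1 (B k) (by omega) hbkξ hBodd
  have hUcard : (Y k ∪ Y (k+1)).card = 4 := by rw [← hbagU]; exact hcard4
  have hInter : (Y k ∩ Y (k+1)).card = 2 := by
    have h := Finset.card_union_add_card_inter (Y k) (Y (k+1))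
    omega
  have hemerge : emergeSet bag (B k) = Y (k+1) \ Y k := by
    unfold emergeSet
    rw [hbagU, hbagm]
    ext x
    simp only [Finset.mem_sdiff, Finset.mem_union]
    tauto
  have hlost : lostSet bag (A (k+1)) = Y k \ Y (k+1) := by
    unfold lostSet
    rw [hAB, hbagU, hbagp]
    ext x
    simp only [Finset.mem_sdiff, Finset.mem_union]
    tauto
  have hucard : (Y (k+1) \ Y k).card = 1 := by
    have h := Finset.card_sdiff_add_card_inter (Y (k+1)) (Y k)
    rw [Finset.inter_comm] at h
    omega
  have hwcard : (Y k \ Y (k+1)).card = 1 := by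
    have h := Finset.card_sdiff_add_card_inter (Y k) (Y (k+1))
    omega
  obtain ⟨u, hu⟩ := Finset.card_eq_one.mp hucard
  obtain ⟨w, hw⟩ := Finset.card_eq_one.mp hwcard
  have humem : u ∈ Y (k+1) \ Y k := hu ▸ Finset.mem_singleton_self u
  have hwmem : w ∈ Y k \ Y (k+1) := hw ▸ Finset.mem_singleton_self w
  have hue : u ∈ emergeSet bag (B k) := by rw [hemerge]; exact humem
  have hwl : w ∈ lostSet bag (A (k+1)) := by rw [hlost]; exact hwmem
  have huB : u ∈ bag (B k) ∧ u ∉ bag (B k - 1) := Finset.mem_sdiff.mp hue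
  refine ⟨u, w, (Finset.mem_sdiff.mp humem).1, (Finset.mem_sdiff.mp hwmem).1,
    ?_, ?_, hue, hwl, ?_, hAkBk, hAB, ?_⟩
  · intro v hv hvw
    by_contra hnot
    have hmem : v ∈ Y k \ Y (k+1) := Finset.mem_sdiff.mpr ⟨hv, hnot⟩
    rw [hw] at hmem
    simp only [Finset.mem_singleton] at hmem
    exact hvw hmem
  · have h1 : u ∈ emergeSet bag (B ((k+1) - 1)) := by
      simpa using hue
    exact hadj (k+1) (by omega) hkκ u h1 w hwl
  · intro t ht1 htB hmem
    have hconv := hpd.2.2.2.2.2.2.1 u t (B k) (B k - 1) ht1 hbkξ (by omega)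
      (by omega) hmem huB.1
    exact huB.2 hconv
  · rw [hAB]; exact huB.1

end TypeII

set_option maxHeartbeats 1000000 in
open SimpleGraph in
/-- Observation 4.3: In a 3-traceable graph, for all 1 ≤ i < j ≤ κ there
exist three pairwise vertex-disjoint paths from T(C_i) to T(C_j), each of which is
either a single vertex (common to both triplets) or consists exactly of Type II edges
(x⁺_{k-1}, x⁻_k) for i < k ≤ j. -/
theorem stmt11 {V : Type*} [DecidableEq V] [Fintype V] (G : SimpleGraph V)
    [DecidableRel G.Adj] (bag : ℕ → Finset V) (ξ κ : ℕ) (A B : ℕ → ℕ)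
    (Y : ℕ → Finset V) (htr : IsThreeTraceable G bag ξ κ A B Y)
    (i j : ℕ) (hi : 1 ≤ i) (hij : i < j) (hj : j ≤ κ) :
    ∃ (u₁ u₂ u₃ w₁ w₂ w₃ : V) (p₁ : G.Walk u₁ w₁) (p₂ : G.Walk u₂ w₂) (p₃ : G.Walk u₃ w₃),
      u₁ ∈ Y i ∧ u₂ ∈ Y i ∧ u₃ ∈ Y i ∧ u₁ ≠ u₂ ∧ u₁ ≠ u₃ ∧ u₂ ≠ u₃ ∧
      w₁ ∈ Y j ∧ w₂ ∈ Y j ∧ w₃ ∈ Y j ∧ w₁ ≠ w₂ ∧ w₁ ≠ w₃ ∧ w₂ ≠ w₃ ∧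
      p₁.IsPath ∧ p₂.IsPath ∧ p₃.IsPath ∧
      p₁.support.Disjoint p₂.support ∧ p₁.support.Disjoint p₃.support ∧
      p₂.support.Disjoint p₃.support ∧
      (∀ p ∈ [(⟨_, _, p₁⟩ : Σ x y : V, G.Walk x y), ⟨_, _, p₂⟩, ⟨_, _, p₃⟩],
        ∀ e ∈ p.2.2.edges, ∃ k u w, i < k ∧ k ≤ j ∧
          u ∈ emergeSet bag (B (k - 1)) ∧ w ∈ lostSet bag (A k) ∧ e = s(u, w)) := by
  classical
  obtain ⟨hpd, hcs, hdeg, hadj⟩ := htr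
  have main : ∀ j, i ≤ j → j ≤ κ →
      ∃ (u₁ u₂ u₃ w₁ w₂ w₃ : V) (p₁ : G.Walk u₁ w₁) (p₂ : G.Walk u₂ w₂) (p₃ : G.Walk u₃ w₃),
        u₁ ∈ Y i ∧ u₂ ∈ Y i ∧ u₃ ∈ Y i ∧ u₁ ≠ u₂ ∧ u₁ ≠ u₃ ∧ u₂ ≠ u₃ ∧
        w₁ ∈ Y j ∧ w₂ ∈ Y j ∧ w₃ ∈ Y j ∧ w₁ ≠ w₂ ∧ w₁ ≠ w₃ ∧ w₂ ≠ w₃ ∧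
        p₁.IsPath ∧ p₂.IsPath ∧ p₃.IsPath ∧
        p₁.support.Disjoint p₂.support ∧ p₁.support.Disjoint p₃.support ∧
        p₂.support.Disjoint p₃.support ∧
        (∀ e, e ∈ p₁.edges ++ p₂.edges ++ p₃.edges → ∃ k u w, i < k ∧ k ≤ j ∧
          u ∈ emergeSet bag (B (k - 1)) ∧ w ∈ lostSet bag (A k) ∧ e = s(u, w)) ∧
        (∀ v, v ∈ p₁.support ++ p₂.support ++ p₃.support →
          ∃ t, 1 ≤ t ∧ t ≤ A j ∧ v ∈ bag t) := by
    intro j hj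
    induction j, hj using Nat.le_induction with
    | base =>
      intro hiκ
      have hci := hcs.1 i hi hiκ
      obtain ⟨y₁, y₂, y₃, h12, h13, h23, hY⟩ := Finset.card_eq_three.mp hci.2.2.2.1
      have hy1 : y₁ ∈ Y i := by rw [hY]; simp
      have hy2 : y₂ ∈ Y i := by rw [hY]; simp
      have hy3 : y₃ ∈ Y i := by rw [hY]; simp
      refine ⟨y₁, y₂, y₃, y₁, y₂, y₃, Walk.nil, Walk.nil, Walk.nil,
        hy1, hy2, hy3, h12, h13, h23, hy1, hy2, hy3, h12, h13, h23,
        Walk.IsPath.nil, Walk.IsPath.nil, Walk.IsPath.nil, ?_, ?_, ?_, ?_, ?_⟩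
      · intro a ha hb
        simp only [Walk.support_nil, List.mem_singleton] at ha hb
        exact h12 (by rw [← ha, ← hb])
      · intro a ha hb
        simp only [Walk.support_nil, List.mem_singleton] at ha hb
        exact h13 (by rw [← ha, ← hb])
      · intro a ha hb
        simp only [Walk.support_nil, List.mem_singleton] at ha hb
        exact h23 (by rw [← ha, ← hb])
      · intro e he
        simp only [Walk.edges_nil, List.append_nil, List.not_mem_nil] at he
      · intro v hv
        refine ⟨A i, hci.1, le_rfl, ?_⟩
        have hsubbag : Y i ⊆ bag (A i) := hci.2.2.2.2.2.1 (A i) le_rfl hci.2.1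
        apply hsubbag
        simp only [Walk.support_nil, List.mem_append, List.mem_singleton] at hv
        rcases hv with (rfl | rfl) | rfl
        exacts [hy1, hy2, hy3]
    | succ j hij ih =>
      intro hj1κ
      have hjκ : j < κ := hj1κ
      obtain ⟨u₁, u₂, u₃, w₁, w₂, w₃, p₁, p₂, p₃, hu1, hu2, hu3, hu12, hu13, hu23,
        hw1, hw2, hw3, hw12, hw13, hw23, hp1, hp2, hp3, hd12, hd13, hd23, hE, hS⟩ :=
        ih (by omega)
      obtain ⟨u, w, huY, hwY, hkeep, huw, huEm, hwLost, hu_not, hAjBj, hABj, hu_bagA⟩ :=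
        typeII hpd hcs hadj (k := j) (by omega) hjκ
      have hA1 : 1 ≤ A (j+1) := (hcs.1 (j+1) (by omega) hj1κ).1
      have key : ∀ (a₁ a₂ a₃ b₂ b₃ : V) (q₁ : G.Walk a₁ w) (q₂ : G.Walk a₂ b₂)
          (q₃ : G.Walk a₃ b₃),
          a₁ ∈ Y i → a₂ ∈ Y i → a₃ ∈ Y i → a₁ ≠ a₂ → a₁ ≠ a₃ → a₂ ≠ a₃ →
          b₂ ∈ Y j → b₃ ∈ Y j → w ≠ b₂ → w ≠ b₃ → b₂ ≠ b₃ →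
          q₁.IsPath → q₂.IsPath → q₃.IsPath →
          q₁.support.Disjoint q₂.support → q₁.support.Disjoint q₃.support →
          q₂.support.Disjoint q₃.support →
          (∀ e, e ∈ q₁.edges ++ q₂.edges ++ q₃.edges → ∃ k u' w', i < k ∧ k ≤ j ∧
            u' ∈ emergeSet bag (B (k - 1)) ∧ w' ∈ lostSet bag (A k) ∧ e = s(u', w')) →
          (∀ v, v ∈ q₁.support ++ q₂.support ++ q₃.support →
            ∃ t, 1 ≤ t ∧ t ≤ A j ∧ v ∈ bag t) →
          (∃ (u₁ u₂ u₃ w₁ w₂ w₃ : V) (p₁ : G.Walk u₁ w₁) (p₂ : G.Walk u₂ w₂)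
              (p₃ : G.Walk u₃ w₃),
            u₁ ∈ Y i ∧ u₂ ∈ Y i ∧ u₃ ∈ Y i ∧ u₁ ≠ u₂ ∧ u₁ ≠ u₃ ∧ u₂ ≠ u₃ ∧
            w₁ ∈ Y (j+1) ∧ w₂ ∈ Y (j+1) ∧ w₃ ∈ Y (j+1) ∧ w₁ ≠ w₂ ∧ w₁ ≠ w₃ ∧ w₂ ≠ w₃ ∧
            p₁.IsPath ∧ p₂.IsPath ∧ p₃.IsPath ∧
            p₁.support.Disjoint p₂.support ∧ p₁.support.Disjoint p₃.support ∧
            p₂.support.Disjoint p₃.support ∧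
            (∀ e, e ∈ p₁.edges ++ p₂.edges ++ p₃.edges → ∃ k u w, i < k ∧ k ≤ j + 1 ∧
              u ∈ emergeSet bag (B (k - 1)) ∧ w ∈ lostSet bag (A k) ∧ e = s(u, w)) ∧
            (∀ v, v ∈ p₁.support ++ p₂.support ++ p₃.support →
              ∃ t, 1 ≤ t ∧ t ≤ A (j+1) ∧ v ∈ bag t)) := by
        intro a₁ a₂ a₃ b₂ b₃ q₁ q₂ q₃ ha1 ha2 ha3 ha12 ha13 ha23 hb2 hb3 hwb2 hwb3
          hb23 hq1 hq2 hq3 hqd12 hqd13 hqd23 hqE hqS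
        have hnotu : ∀ v, v ∈ q₁.support ++ q₂.support ++ q₃.support → v ≠ u := by
          intro v hv hvu
          obtain ⟨t, ht1, ht2, ht3⟩ := hqS v hv
          subst hvu
          exact hu_not t ht1 (by omega) ht3
        let q₁' : G.Walk a₁ u := (Walk.cons huw q₁.reverse).reverse
        have hsupp' : ∀ v, v ∈ q₁'.support ↔ v = u ∨ v ∈ q₁.support := by
          intro v
          have hwsup : w ∈ q₁.support := Walk.end_mem_support q₁
          simp only [q₁', Walk.support_reverse, Walk.support_cons, List.mem_reverse,
            List.mem_cons]
          try tauto
        have hedges' : ∀ e, e ∈ q₁'.edges ↔ e = s(u, w) ∨ e ∈ q₁.edges := by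
          intro e
          have hsw : s(w, u) = s(u, w) := Sym2.eq_swap
          simp only [q₁', Walk.edges_reverse, Walk.edges_cons, List.mem_reverse,
            List.mem_cons]
          try (rw [hsw] at *)
          try tauto
        have hq1' : q₁'.IsPath := by
          apply Walk.IsPath.reverse
          rw [Walk.cons_isPath_iff]
          refine ⟨hq1.reverse, ?_⟩
          rw [Walk.support_reverse, List.mem_reverse]
          intro hmem
          exact hnotu u (by simp [hmem]) rfl
        have hb2u : b₂ ≠ u := hnotu b₂ (by simp [Walk.end_mem_support])
        have hb3u : b₃ ≠ u := hnotu b₃ (by simp [Walk.end_mem_support])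
        refine ⟨a₁, a₂, a₃, u, b₂, b₃, q₁', q₂, q₃, ha1, ha2, ha3, ha12, ha13, ha23,
          huY, hkeep b₂ hb2 (Ne.symm hwb2), hkeep b₃ hb3 (Ne.symm hwb3),
          Ne.symm hb2u, Ne.symm hb3u, hb23, hq1', hq2, hq3, ?_, ?_, hqd23, ?_, ?_⟩
        · intro a ha hb
          rcases (hsupp' a).1 ha with rfl | ha'
          · exact hnotu a (by simp [hb]) rfl
          · exact hqd12 ha' hb
        · intro a ha hb
          rcases (hsupp' a).1 ha with rfl | ha'
          · exact hnotu a (by simp [hb]) rfl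
          · exact hqd13 ha' hb
        · intro e he
          simp only [List.mem_append] at he
          rcases he with (he | he) | he
          · rcases (hedges' e).1 he with rfl | he'
            · refine ⟨j+1, u, w, by omega, le_rfl, ?_, hwLost, rfl⟩
              simpa using huEm
            · obtain ⟨k', u', w', h1, h2, h3, h4, h5⟩ := hqE e (by simp [he'])
              exact ⟨k', u', w', h1, by omega, h3, h4, h5⟩
          · obtain ⟨k', u', w', h1, h2, h3, h4, h5⟩ := hqE e (by simp [he])
            exact ⟨k', u', w', h1, by omega, h3, h4, h5⟩
          · obtain ⟨k', u', w', h1, h2, h3, h4, h5⟩ := hqE e (by simp [he])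
            exact ⟨k', u', w', h1, by omega, h3, h4, h5⟩
        · intro v hv
          simp only [List.mem_append] at hv
          rcases hv with (hv | hv) | hv
          · rcases (hsupp' v).1 hv with rfl | hv'
            · exact ⟨A (j+1), hA1, le_rfl, hu_bagA⟩
            · obtain ⟨t, ht1, ht2, ht3⟩ := hqS v (by simp [hv'])
              exact ⟨t, ht1, by omega, ht3⟩
          · obtain ⟨t, ht1, ht2, ht3⟩ := hqS v (by simp [hv])
            exact ⟨t, ht1, by omega, ht3⟩
          · obtain ⟨t, ht1, ht2, ht3⟩ := hqS v (by simp [hv])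
            exact ⟨t, ht1, by omega, ht3⟩
      have hwcase : w = w₁ ∨ w = w₂ ∨ w = w₃ := by
        have hsub : ({w₁, w₂, w₃} : Finset V) ⊆ Y j := by
          intro x hx
          simp only [Finset.mem_insert, Finset.mem_singleton] at hx
          rcases hx with rfl | rfl | rfl
          exacts [hw1, hw2, hw3]
        have hcard : ({w₁, w₂, w₃} : Finset V).card = 3 :=
          Finset.card_eq_three.mpr ⟨w₁, w₂, w₃, hw12, hw13, hw23, rfl⟩
        have hYc : (Y j).card = 3 := (hcs.1 j (by omega) (by omega)).2.2.2.1
        have heq := Finset.eq_of_subset_of_card_le hsub (by omega)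
        have hwmem : w ∈ ({w₁, w₂, w₃} : Finset V) := by rw [heq]; exact hwY
        simpa using hwmem
      rcases hwcase with h | h | h
      · subst h
        exact key u₁ u₂ u₃ w₂ w₃ p₁ p₂ p₃ hu1 hu2 hu3 hu12 hu13 hu23 hw2 hw3
          hw12 hw13 hw23 hp1 hp2 hp3 hd12 hd13 hd23 hE hS
      · subst h
        refine key u₂ u₁ u₃ w₁ w₃ p₂ p₁ p₃ hu2 hu1 hu3 (Ne.symm hu12) hu23 hu13
          hw1 hw3 (Ne.symm hw12) hw23 hw13 hp2 hp1 hp3 (List.Disjoint.symm hd12)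
          hd23 hd13 ?_ ?_
        · intro e he
          refine hE e ?_
          simp only [List.mem_append] at he ⊢
          tauto
        · intro v hv
          refine hS v ?_
          simp only [List.mem_append] at hv ⊢
          tauto
      · subst h
        refine key u₃ u₂ u₁ w₂ w₁ p₃ p₂ p₁ hu3 hu2 hu1 (Ne.symm hu23) (Ne.symm hu13)
          (Ne.symm hu12) hw2 hw1 (Ne.symm hw23) (Ne.symm hw13) (Ne.symm hw12)
          hp3 hp2 hp1 (List.Disjoint.symm hd23) (List.Disjoint.symm hd13)
          (List.Disjoint.symm hd12) ?_ ?_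
        · intro e he
          refine hE e ?_
          simp only [List.mem_append] at he ⊢
          tauto
        · intro v hv
          refine hS v ?_
          simp only [List.mem_append] at hv ⊢
          tauto
  obtain ⟨u₁, u₂, u₃, w₁, w₂, w₃, p₁, p₂, p₃, hu1, hu2, hu3, hu12, hu13, hu23,
    hw1, hw2, hw3, hw12, hw13, hw23, hp1, hp2, hp3, hd12, hd13, hd23, hE, hS⟩ :=
    main j (le_of_lt hij) hj
  refine ⟨u₁, u₂, u₃, w₁, w₂, w₃, p₁, p₂, p₃, hu1, hu2, hu3, hu12, hu13, hu23,
    hw1, hw2, hw3, hw12, hw13, hw23, hp1, hp2, hp3, hd12, hd13, hd23, ?_⟩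
  intro p hp
  simp only [List.mem_cons, List.not_mem_nil, or_false] at hp
  rcases hp with rfl | rfl | rfl
  · intro e he
    exact hE e (by simp only [List.mem_append]; exact Or.inl (Or.inl he))
  · intro e he
    exact hE e (by simp only [List.mem_append]; exact Or.inl (Or.inr he))
  · intro e he
    exact hE e (by simp only [List.mem_append]; exact Or.inr he)
end

section
/- Let G be a maximal graph of pathwidth w with age-order v₁,…,v_n, and for i ≥ w+2 let p^i₁,…,p^i_w be the predecessors (older neighbors) of v_i in age order. Then for all k ≥ 4, deg_{G_i}(p^i₃) ≥ deg_{G_i}(p^i_k), where G_i is the subgraph induced by {v₁,…,v_i}. -/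
/-- Degree of vertex `v` within `G_i`, the subgraph of `G` induced by the `i` oldest
vertices `{1,…,i}` (vertices are natural numbers listed in age-order). -/
def degIn (G : SimpleGraph ℕ) [DecidableRel G.Adj] (i v : ℕ) : ℕ :=
  ((Finset.Icc 1 i).filter (fun u => G.Adj v u)).card

/-- A maximal pathwidth-`w` graph on vertices `1,…,n` (in age-order), presented by an
alternating path decomposition of width `w`: `ξ = 2n - 2w - 1` bags, sizes alternating
`w+1` (odd index) / `w` (even index), even bags contained in both neighbors, edge
coverage, interval (convexity) property, every vertex covered, all bags cliques
(maximality), first bag `{1,…,w+1}`, and the age-order compatible with the order of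
introduction of vertices: `fb u` is the first bag containing `u`, and first bags are
increasing in age for vertices introduced after the first bag. -/
def IsMaxAltPDW (G : SimpleGraph ℕ) (n w ξ : ℕ) (bag : ℕ → Finset ℕ)
    (fb : ℕ → ℕ) : Prop :=
  4 ≤ w ∧ w + 1 < n ∧ ξ = 2 * n - 2 * w - 1 ∧
  (∀ i, 1 ≤ i → i ≤ ξ → bag i ⊆ Finset.Icc 1 n) ∧
  (∀ i, 1 ≤ i → i ≤ ξ → i % 2 = 1 → (bag i).card = w + 1) ∧
  (∀ i, 1 ≤ i → i ≤ ξ → i % 2 = 0 → (bag i).card = w) ∧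
  (∀ i, 1 < i → i < ξ → i % 2 = 0 → bag i ⊆ bag (i - 1) ∧ bag i ⊆ bag (i + 1)) ∧
  (∀ u v : ℕ, G.Adj u v → ∃ i, 1 ≤ i ∧ i ≤ ξ ∧ u ∈ bag i ∧ v ∈ bag i) ∧
  (∀ (x i j k : ℕ), 1 ≤ i → j ≤ ξ → i ≤ k → k ≤ j →
    x ∈ bag i → x ∈ bag j → x ∈ bag k) ∧
  (∀ x, 1 ≤ x → x ≤ n → ∃ i, 1 ≤ i ∧ i ≤ ξ ∧ x ∈ bag i) ∧
  (∀ i, 1 ≤ i → i ≤ ξ → ∀ u ∈ bag i, ∀ v ∈ bag i, u ≠ v → G.Adj u v) ∧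
  bag 1 = Finset.Icc 1 (w + 1) ∧
  (∀ u, w + 1 < u → u ≤ n →
    1 ≤ fb u ∧ fb u ≤ ξ ∧ u ∈ bag (fb u) ∧ ∀ j, 1 ≤ j → j < fb u → u ∉ bag j) ∧
  (∀ u v, w + 1 < u → u < v → v ≤ n → fb u < fb v)

/-- Observation E.2: Let G be a maximal graph of pathwidth w with
age-order v₁,…,v_n (here vertex v_i is the natural number i) and for i ≥ w+2 let
p 1 < p 2 < … < p w be the predecessors (older neighbors) of v_i. Then for all
4 ≤ k ≤ w, the degree of p 3 in G_i is at least the degree of p k in G_i. -/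
theorem stmt17 (G : SimpleGraph ℕ) [DecidableRel G.Adj] (n w ξ : ℕ)
    (bag : ℕ → Finset ℕ) (fb : ℕ → ℕ)
    (hdec : IsMaxAltPDW G n w ξ bag fb)
    (i : ℕ) (hi : w + 2 ≤ i) (hin : i ≤ n)
    (p : ℕ → ℕ)
    (hpmono : ∀ k k', 1 ≤ k → k < k' → k' ≤ w → p k < p k')
    (hpred : ∀ k, 1 ≤ k → k ≤ w → p k < i ∧ G.Adj (p k) i)
    (hpall : ∀ u, u < i → G.Adj u i → ∃ k, 1 ≤ k ∧ k ≤ w ∧ p k = u)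
    (k : ℕ) (hk4 : 4 ≤ k) (hkw : k ≤ w) :
    degIn G i (p k) ≤ degIn G i (p 3) := by

  obtain ⟨hw4, hwn, hxi, hbagsub, hodd, heven, hevensub, hcover, hinterval,
    hall, hclique, hbag1, hfb, hfbmono⟩ := hdec
  have hxiodd : ξ % 2 = 1 := by omega
  obtain ⟨hbi1, hbix, hibi, hbimin⟩ := hfb i (by omega) hin
  set bi := fb i with hbi_def
  have hbiodd : bi % 2 = 1 := by
    by_contra h
    have h0 : bi % 2 = 0 := by omega
    have hbine1 : 1 < bi := by omega
    have hbilt : bi < ξ := by omega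
    have hsub := (hevensub bi hbine1 hbilt h0).1
    exact hbimin (bi - 1) (by omega) (by omega) (hsub hibi)
  have hcardbi : (bag bi).card = w + 1 := hodd bi hbi1 hbix hbiodd
  have hpredmem : ∀ v ∈ bag bi, v ≠ i → v < i ∧ G.Adj v i := by
    intro v hv hvne
    have hvn := Finset.mem_Icc.mp (hbagsub bi hbi1 hbix hv)
    have hvlt : v < i := by
      by_contra hge
      have hvw : w + 1 < v := by omega
      obtain ⟨_, _, _, hvmin⟩ := hfb v hvw hvn.2
      have := hfbmono i v (by omega) (by omega) hvn.2
      exact hvmin bi (by omega) (by omega) hv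
    exact ⟨hvlt, hclique bi hbi1 hbix v hv i hibi hvne⟩
  have hpbag : ∀ k', 1 ≤ k' → k' ≤ w → p k' ∈ bag bi := by
    have hinj : Set.InjOn p (Finset.Icc 1 w) := by
      intro a ha b hb hab
      simp only [Finset.coe_Icc, Set.mem_Icc] at ha hb
      by_contra hne
      rcases Nat.lt_or_ge a b with h | h
      · exact absurd hab (Nat.ne_of_lt (hpmono a b ha.1 h hb.2))
      · exact absurd hab.symm (Nat.ne_of_lt (hpmono b a hb.1 (by omega) ha.2))
    have hcardP : ((Finset.Icc 1 w).image p).card = w := by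
      rw [Finset.card_image_of_injOn hinj, Nat.card_Icc]; omega
    have hsub : (bag bi).erase i ⊆ (Finset.Icc 1 w).image p := by
      intro v hv
      have hvne := Finset.ne_of_mem_erase hv
      obtain ⟨hvlt, hvadj⟩ := hpredmem v (Finset.mem_of_mem_erase hv) hvne
      obtain ⟨k', hk'1, hk'w, hpk'⟩ := hpall v hvlt hvadj
      exact Finset.mem_image.mpr ⟨k', Finset.mem_Icc.mpr ⟨hk'1, hk'w⟩, hpk'⟩
    have hcardE : ((bag bi).erase i).card = w := by
      rw [Finset.card_erase_of_mem hibi, hcardbi]; omega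
    have heq : (bag bi).erase i = (Finset.Icc 1 w).image p :=
      Finset.eq_of_subset_of_card_le hsub (by omega)
    intro k' hk'1 hk'w
    have hmem : p k' ∈ (Finset.Icc 1 w).image p :=
      Finset.mem_image_of_mem p (Finset.mem_Icc.mpr ⟨hk'1, hk'w⟩)
    rw [← heq] at hmem
    exact Finset.mem_of_mem_erase hmem
  have hp3bag : p 3 ∈ bag bi := hpbag 3 (by omega) (by omega)
  have hpkbag : p k ∈ bag bi := hpbag k (by omega) hkw
  have hp3lt : p 3 < i := (hpred 3 (by omega) (by omega)).1
  have hpklt : p k < i := (hpred k (by omega) hkw).1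
  have hp3ge1 : 1 ≤ p 3 := (Finset.mem_Icc.mp (hbagsub bi hbi1 hbix hp3bag)).1
  have hpkge1 : 1 ≤ p k := (Finset.mem_Icc.mp (hbagsub bi hbi1 hbix hpkbag)).1
  have hp3pk : p 3 < p k := hpmono 3 k (by omega) (by omega) hkw
  have hadj3k : G.Adj (p 3) (p k) :=
    hclique bi hbi1 hbix (p 3) hp3bag (p k) hpkbag (by omega)
  have hmain : ∀ u, u ∈ Finset.Icc 1 i → G.Adj (p k) u → u ≠ p 3 → G.Adj (p 3) u := by
    intro u hu hadj hune
    obtain ⟨hu1, hui⟩ := Finset.mem_Icc.mp hu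
    obtain ⟨j, hj1, hjx, hpkj, huj⟩ := hcover (p k) u hadj
    rcases le_or_gt j bi with hjbi | hjbi
    · have hp3j : p 3 ∈ bag j := by
        by_cases hp3w : p 3 ≤ w + 1
        · have hp3b1 : p 3 ∈ bag 1 := by
            rw [hbag1]; exact Finset.mem_Icc.mpr ⟨hp3ge1, hp3w⟩
          exact hinterval (p 3) 1 bi j le_rfl hbix hj1 hjbi hp3b1 hp3bag
        · obtain ⟨hf1, hfx, hfmem, hfmin⟩ := hfb (p 3) (by omega) (by omega)
          rcases le_or_gt (fb (p 3)) j with hfj | hfj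
          · exact hinterval (p 3) (fb (p 3)) bi j hf1 hbix hfj hjbi hfmem hp3bag
          · exfalso
            obtain ⟨_, _, _, hkmin⟩ := hfb (p k) (by omega) (by omega)
            have := hfbmono (p 3) (p k) (by omega) hp3pk (by omega)
            exact hkmin j hj1 (by omega) hpkj
      exact hclique j hj1 hjx (p 3) hp3j u huj (Ne.symm hune)
    · have hubi : u ∈ bag bi := by
        rcases eq_or_lt_of_le hui with heq | hlt
        · rw [heq]; exact hibi
        · by_cases huw : u ≤ w + 1
          · have hub1 : u ∈ bag 1 := by
              rw [hbag1]; exact Finset.mem_Icc.mpr ⟨hu1, huw⟩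
            exact hinterval u 1 j bi le_rfl hjx hbi1 (le_of_lt hjbi) hub1 huj
          · obtain ⟨hf1, hfx, hfmem, hfmin⟩ := hfb u (by omega) (by omega)
            have hflt := hfbmono u i (by omega) hlt hin
            exact hinterval u (fb u) j bi hf1 hjx (by omega) (le_of_lt hjbi) hfmem huj
      exact hclique bi hbi1 hbix (p 3) hp3bag u hubi (Ne.symm hune)
  unfold degIn
  have h3mem : p 3 ∈ (Finset.Icc 1 i).filter (fun u => G.Adj (p k) u) :=
    Finset.mem_filter.mpr ⟨Finset.mem_Icc.mpr ⟨hp3ge1, by omega⟩, hadj3k.symm⟩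
  have hkmem : p k ∈ (Finset.Icc 1 i).filter (fun u => G.Adj (p 3) u) :=
    Finset.mem_filter.mpr ⟨Finset.mem_Icc.mpr ⟨hpkge1, by omega⟩, hadj3k⟩
  have hsub : ((Finset.Icc 1 i).filter (fun u => G.Adj (p k) u)).erase (p 3) ⊆
      ((Finset.Icc 1 i).filter (fun u => G.Adj (p 3) u)).erase (p k) := by
    intro u hu
    have hune := Finset.ne_of_mem_erase hu
    obtain ⟨humem, huadj⟩ := Finset.mem_filter.mp (Finset.mem_of_mem_erase hu)
    exact Finset.mem_erase.mpr ⟨huadj.ne',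
      Finset.mem_filter.mpr ⟨humem, hmain u humem huadj hune⟩⟩
  calc ((Finset.Icc 1 i).filter (fun u => G.Adj (p k) u)).card
      = (((Finset.Icc 1 i).filter (fun u => G.Adj (p k) u)).erase (p 3)).card + 1 :=
        (Finset.card_erase_add_one h3mem).symm
    _ ≤ (((Finset.Icc 1 i).filter (fun u => G.Adj (p 3) u)).erase (p k)).card + 1 :=
        Nat.add_le_add_right (Finset.card_le_card hsub) 1
    _ = ((Finset.Icc 1 i).filter (fun u => G.Adj (p 3) u)).card :=
        Finset.card_erase_add_one hkmem
end

section
/- Let C be a cluster of a width-w alternating path decomposition of a maximal pathwidth-w graph G with anchor triplet T(C) = {p₁,p₂,p₃} in age order, and let i(C) be the number of vertices introduced by C (appearing in C but not in G_{w+1} nor in any cluster ending at an earlier bag). Then: the first bag of C introduces p₃; i(C) ≤ n(C) - (w+1), where n(C) = |V(C)|; and for every vertex v_i introduced by C, deg_{G_i}(p₃) ≤ n(C) - 1. -/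
/-- The set of (indices of) bags containing the anchor triplet `T`. -/
def clusterBagsW (bag : ℕ → Finset ℕ) (ξ : ℕ) (T : Finset ℕ) : Finset ℕ :=
  (Finset.Icc 1 ξ).filter (fun k => T ⊆ bag k)

/-- The vertex set `V(C)` of the cluster with anchor triplet `T`. -/
def clusterVertsW (bag : ℕ → Finset ℕ) (ξ : ℕ) (T : Finset ℕ) : Finset ℕ :=
  (clusterBagsW bag ξ T).biUnion bag

/-- `T` is an anchor triplet for width-`w` clusters: the three oldest vertices of some
bag other than the first. -/
def IsAnchorW (bag : ℕ → Finset ℕ) (ξ : ℕ) (T : Finset ℕ) : Prop :=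
  T.card = 3 ∧ ∃ j, 2 ≤ j ∧ j ≤ ξ ∧ T ⊆ bag j ∧
    ∀ x ∈ T, ∀ y ∈ bag j, y ∉ T → x < y

/-- Vertex `u` is introduced by the cluster with anchor triplet `T`: it appears in the
cluster, but not in `G_{w+1}` nor in any cluster ending at an earlier bag. -/
def IntroducedBy (bag : ℕ → Finset ℕ) (ξ w : ℕ) (T : Finset ℕ) (u : ℕ) : Prop :=
  u ∈ clusterVertsW bag ξ T ∧ w + 1 < u ∧
  ∀ T', IsAnchorW bag ξ T' →
    (clusterBagsW bag ξ T').sup id < (clusterBagsW bag ξ T).sup id →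
    u ∉ clusterVertsW bag ξ T'

/-- Observation E.3: Let C be a cluster of a width-w alternating path
decomposition of a maximal pathwidth-w graph, with anchor triplet T = {p₁,p₂,p₃} in
age order, and let i(C) be the number of vertices introduced by C. Then the first bag
of C introduces p₃; i(C) ≤ n(C) - (w+1); and for every vertex v_i introduced by C,
deg_{G_i}(p₃) ≤ n(C) - 1. -/
theorem stmt18 (G : SimpleGraph ℕ) [DecidableRel G.Adj] (n w ξ : ℕ)
    (bag : ℕ → Finset ℕ) (fb : ℕ → ℕ)
    (hdec : IsMaxAltPDW G n w ξ bag fb)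
    (T : Finset ℕ) (p₁ p₂ p₃ : ℕ) (hT : T = {p₁, p₂, p₃})
    (h12 : p₁ < p₂) (h23 : p₂ < p₃)
    (hanchor : IsAnchorW bag ξ T) :
    (∃ a ∈ clusterBagsW bag ξ T, (∀ j ∈ clusterBagsW bag ξ T, a ≤ j) ∧
      p₃ ∈ bag a ∧ ∀ j, 1 ≤ j → j < a → p₃ ∉ bag j) ∧
    {u | IntroducedBy bag ξ w T u}.ncard ≤ (clusterVertsW bag ξ T).card - (w + 1) ∧
    (∀ i, IntroducedBy bag ξ w T i → degIn G i p₃ ≤ (clusterVertsW bag ξ T).card - 1) := by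
  obtain ⟨hw4, hn, hξ, hbsub, hoddc, hevenc, hevensub, hedge, hconv, hcov, hclq, hbag1, hfb, hmono⟩ := hdec
  obtain ⟨hTcard, j, hj2, hjξ, hTj, hTmin⟩ := hanchor
  have hξodd : ξ % 2 = 1 := by omega
  have hp1T : p₁ ∈ T := by simp [hT]
  have hp2T : p₂ ∈ T := by simp [hT]
  have hp3T : p₃ ∈ T := by simp [hT]
  have hp1j : p₁ ∈ bag j := hTj hp1T
  have hp2j : p₂ ∈ bag j := hTj hp2T
  have hp3j : p₃ ∈ bag j := hTj hp3T
  have hjn : bag j ⊆ Finset.Icc 1 n := hbsub j (by omega) hjξ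
  have hp1n := Finset.mem_Icc.1 (hjn hp1j)
  have hp3n := Finset.mem_Icc.1 (hjn hp3j)
  have hmemBags : ∀ k, 1 ≤ k → k ≤ ξ → T ⊆ bag k → k ∈ clusterBagsW bag ξ T := by
    intro k h1 h2 h3
    simp only [clusterBagsW, Finset.mem_filter, Finset.mem_Icc]
    exact ⟨⟨h1, h2⟩, h3⟩
  have hBagsmem : ∀ k, k ∈ clusterBagsW bag ξ T → 1 ≤ k ∧ k ≤ ξ ∧ T ⊆ bag k := by
    intro k hk
    simp only [clusterBagsW, Finset.mem_filter, Finset.mem_Icc] at hk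
    exact ⟨hk.1.1, hk.1.2, hk.2⟩
  have hjBags : j ∈ clusterBagsW bag ξ T := hmemBags j (by omega) hjξ hTj
  -- the last bag of the cluster
  set b := (clusterBagsW bag ξ T).sup id with hbdef
  obtain ⟨b₀, hb₀mem, hb₀eq⟩ := Finset.exists_mem_eq_sup (clusterBagsW bag ξ T) ⟨j, hjBags⟩ id
  have hbmem : b ∈ clusterBagsW bag ξ T := by rw [hbdef, hb₀eq]; exact hb₀mem
  obtain ⟨hb1, hbξ, hTb⟩ := hBagsmem b hbmem
  have hleb : ∀ k, k ∈ clusterBagsW bag ξ T → k ≤ b := fun k hk => Finset.le_sup (f := id) hk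
  -- the core package: the first bag a of the cluster
  have core : ∃ a, 1 ≤ a ∧ a ≤ ξ ∧ T ⊆ bag a ∧ p₃ ∈ bag a ∧
      (∀ k, 1 ≤ k → k < a → p₃ ∉ bag k) ∧ a % 2 = 1 ∧
      (∀ u, IntroducedBy bag ξ w T u → u ∉ bag a) := by
    by_cases hp3w : p₃ ≤ w + 1
    · refine ⟨1, le_refl 1, by omega, ?_, ?_, by omega, by norm_num, ?_⟩
      · rw [hT, hbag1]
        intro x hx
        simp only [Finset.mem_insert, Finset.mem_singleton] at hx
        rcases hx with rfl | rfl | rfl <;> rw [Finset.mem_Icc] <;> omega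
      · rw [hbag1, Finset.mem_Icc]; omega
      · intro u hu hu1
        rw [hbag1, Finset.mem_Icc] at hu1
        have := hu.2.1
        omega
    · -- p₃ > w + 1
      push_neg at hp3w
      obtain ⟨ha1, haξ, hp3a, hbef⟩ := hfb p₃ hp3w hp3n.2
      set a := fb p₃ with hadef
      have ha_le : ∀ k, 1 ≤ k → p₃ ∈ bag k → a ≤ k := by
        intro k h1 h2
        by_contra h
        exact hbef k h1 (by omega) h2
      have haj : a ≤ j := ha_le j (by omega) hp3j
      have hp1a : p₁ ∈ bag a := by
        by_cases h1 : p₁ ≤ w + 1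
        · have : p₁ ∈ bag 1 := by rw [hbag1, Finset.mem_Icc]; omega
          exact hconv p₁ 1 j a (le_refl 1) hjξ ha1 haj this hp1j
        · push_neg at h1
          have h1n : p₁ ≤ n := hp1n.2
          have hlt : fb p₁ < a := hmono p₁ p₃ h1 (h12.trans h23) hp3n.2
          obtain ⟨hf1, hf2, hf3, _⟩ := hfb p₁ h1 h1n
          exact hconv p₁ (fb p₁) j a hf1 hjξ (le_of_lt hlt) haj hf3 hp1j
      have hp2a : p₂ ∈ bag a := by
        by_cases h1 : p₂ ≤ w + 1
        · have : p₂ ∈ bag 1 := by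
            rw [hbag1, Finset.mem_Icc]
            exact ⟨by omega, h1⟩
          exact hconv p₂ 1 j a (le_refl 1) hjξ ha1 haj this hp2j
        · push_neg at h1
          have h1n : p₂ ≤ n := (Finset.mem_Icc.1 (hjn hp2j)).2
          have hlt : fb p₂ < a := hmono p₂ p₃ h1 h23 hp3n.2
          obtain ⟨hf1, hf2, hf3, _⟩ := hfb p₂ h1 h1n
          exact hconv p₂ (fb p₂) j a hf1 hjξ (le_of_lt hlt) haj hf3 hp2j
      have hTa : T ⊆ bag a := by
        rw [hT]
        intro x hx
        simp only [Finset.mem_insert, Finset.mem_singleton] at hx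
        rcases hx with rfl | rfl | rfl <;> assumption
      have ha2 : 2 ≤ a := by
        rcases Nat.lt_or_ge a 2 with h | h
        · exfalso
          have : a = 1 := by omega
          rw [this, hbag1, Finset.mem_Icc] at hp3a
          omega
        · exact h
      have haodd : a % 2 = 1 := by
        by_contra h
        have h0 : a % 2 = 0 := by omega
        have haltξ : a < ξ := by omega
        have := (hevensub a (by omega) haltξ h0).1
        exact hbef (a - 1) (by omega) (by omega) (this hp3a)
      refine ⟨a, ha1, haξ, hTa, hp3a, hbef, haodd, ?_⟩
      -- no introduced vertex lies in bag a
      have hcarda : (bag a).card = w + 1 := hoddc a ha1 haξ haodd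
      have hane : (bag a).Nonempty := Finset.card_pos.1 (by omega)
      set m₁ := (bag a).min' hane with hm1def
      have hm1mem : m₁ ∈ bag a := Finset.min'_mem _ _
      have hs2ne : ((bag a).erase m₁).Nonempty := by
        apply Finset.card_pos.1
        rw [Finset.card_erase_of_mem hm1mem]
        omega
      set m₂ := ((bag a).erase m₁).min' hs2ne with hm2def
      have hm2mem' : m₂ ∈ (bag a).erase m₁ := Finset.min'_mem _ _
      have hm2mem : m₂ ∈ bag a := Finset.mem_of_mem_erase hm2mem'
      have hs3ne : (((bag a).erase m₁).erase m₂).Nonempty := by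
        apply Finset.card_pos.1
        rw [Finset.card_erase_of_mem hm2mem', Finset.card_erase_of_mem hm1mem]
        omega
      set m₃ := (((bag a).erase m₁).erase m₂).min' hs3ne with hm3def
      have hm3mem'' : m₃ ∈ ((bag a).erase m₁).erase m₂ := Finset.min'_mem _ _
      have hm3mem' : m₃ ∈ (bag a).erase m₁ := Finset.mem_of_mem_erase hm3mem''
      have hm3mem : m₃ ∈ bag a := Finset.mem_of_mem_erase hm3mem'
      have h12' : m₁ < m₂ := by
        have h := Finset.min'_le (bag a) m₂ hm2mem
        have : m₂ ≠ m₁ := Finset.ne_of_mem_erase hm2mem'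
        omega
      have h23' : m₂ < m₃ := by
        have h := Finset.min'_le ((bag a).erase m₁) m₃ hm3mem'
        have : m₃ ≠ m₂ := Finset.ne_of_mem_erase hm3mem''
        omega
      set T' : Finset ℕ := {m₁, m₂, m₃} with hT'def
      have hT'card : T'.card = 3 :=
        Finset.card_eq_three.2 ⟨m₁, m₂, m₃, by omega, by omega, by omega, rfl⟩
      have hT'a : T' ⊆ bag a := by
        intro x hx
        simp only [hT'def, Finset.mem_insert, Finset.mem_singleton] at hx
        rcases hx with rfl | rfl | rfl <;> assumption
      have hT'min : ∀ y ∈ bag a, y ∉ T' → m₁ < y ∧ m₂ < y ∧ m₃ < y := by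
        intro y hy hyT'
        simp only [hT'def, Finset.mem_insert, Finset.mem_singleton, not_or] at hyT'
        obtain ⟨hy1, hy2, hy3⟩ := hyT'
        have e1 : y ∈ (bag a).erase m₁ := Finset.mem_erase.2 ⟨hy1, hy⟩
        have e2 : y ∈ ((bag a).erase m₁).erase m₂ := Finset.mem_erase.2 ⟨hy2, e1⟩
        have l1 := Finset.min'_le (bag a) y hy
        have l2 := Finset.min'_le ((bag a).erase m₁) y e1
        have l3 := Finset.min'_le (((bag a).erase m₁).erase m₂) y e2
        exact ⟨by omega, by omega, by omega⟩
      have hanchor' : IsAnchorW bag ξ T' := by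
        refine ⟨hT'card, a, ha2, haξ, hT'a, ?_⟩
        intro x hx y hy hyT'
        obtain ⟨l1, l2, l3⟩ := hT'min y hy hyT'
        simp only [hT'def, Finset.mem_insert, Finset.mem_singleton] at hx
        rcases hx with rfl | rfl | rfl <;> assumption
      -- p₃ is the maximum of bag a
      have hmax : ∀ y ∈ bag a, y ≤ p₃ := by
        intro y hy
        by_cases h1 : y ≤ w + 1
        · omega
        · push_neg at h1
          by_contra h
          push_neg at h
          have hyn : y ≤ n := (Finset.mem_Icc.1 (hbsub a ha1 haξ hy)).2
          have := hmono p₃ y hp3w h hyn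
          exact (hfb y h1 hyn).2.2.2 a ha1 (by omega) hy
      have haBags' : a ∈ clusterBagsW bag ξ T' := by
        simp only [clusterBagsW, Finset.mem_filter, Finset.mem_Icc]
        exact ⟨⟨ha1, haξ⟩, hT'a⟩
      have hab : a ≤ b := hleb a (hmemBags a ha1 haξ hTa)
      -- the cluster of T' ends before b
      have hsup' : (clusterBagsW bag ξ T').sup id < (clusterBagsW bag ξ T).sup id := by
        obtain ⟨b', hb'mem, hb'eq⟩ :=
          Finset.exists_mem_eq_sup (clusterBagsW bag ξ T') ⟨a, haBags'⟩ id
        simp only [clusterBagsW, Finset.mem_filter, Finset.mem_Icc] at hb'mem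
        obtain ⟨⟨hb'1, hb'ξ⟩, hT'b'⟩ := hb'mem
        rw [← hbdef, hb'eq, id]
        by_contra h
        push_neg at h
        -- then T' ⊆ bag b, hence T' ⊆ bag j, hence T' ⊆ T, contradiction
        have hT'bagb : ∀ x ∈ T', x ∈ bag b := by
          intro x hx
          exact hconv x a b' b ha1 hb'ξ hab h (hT'a hx) (hT'b' hx)
        have hjb : j ≤ b := hleb j hjBags
        have hT'bagj : ∀ x ∈ T', x ∈ bag j := by
          intro x hx
          exact hconv x a b j ha1 hbξ haj hjb (hT'a hx) (hT'bagb x hx)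
        have hT'T : T' ⊆ T := by
          intro x hx
          by_contra hxT
          have := hTmin p₃ hp3T x (hT'bagj x hx) hxT
          have := hmax x (hT'a hx)
          omega
        have hT'eq : T' = T := Finset.eq_of_subset_of_card_le hT'T (by omega)
        have hp3T' : p₃ ∈ T' := hT'eq ▸ hp3T
        obtain ⟨y, hy, hyT'⟩ : ∃ y ∈ bag a, y ∉ T' := by
          by_contra hc
          push_neg at hc
          have : (bag a).card ≤ T'.card := Finset.card_le_card hc
          omega
        obtain ⟨l1, l2, l3⟩ := hT'min y hy hyT'
        have hyp3 := hmax y hy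
        simp only [hT'def, Finset.mem_insert, Finset.mem_singleton] at hp3T'
        rcases hp3T' with h | h | h <;> omega
      intro u hu hua
      exact hu.2.2 T' hanchor' hsup' (Finset.mem_biUnion.2 ⟨a, haBags', hua⟩)
  obtain ⟨a, ha1, haξ, hTa, hp3a, hbef, haodd, hnotintro⟩ := core
  have haBags : a ∈ clusterBagsW bag ξ T := hmemBags a ha1 haξ hTa
  have hab : a ≤ b := hleb a haBags
  have hmink : ∀ k ∈ clusterBagsW bag ξ T, a ≤ k := by
    intro k hk
    obtain ⟨hk1, hkξ, hTk⟩ := hBagsmem k hk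
    by_contra h
    exact hbef k hk1 (by omega) (hTk hp3T)
  have hbagssub : ∀ m, a ≤ m → m ≤ b → m ∈ clusterBagsW bag ξ T := by
    intro m h1 h2
    refine hmemBags m (by omega) (by omega) ?_
    intro x hx
    exact hconv x a b m ha1 hbξ h1 h2 (hTa hx) (hTb hx)
  have hbagasub : bag a ⊆ clusterVertsW bag ξ T := by
    intro x hx
    exact Finset.mem_biUnion.2 ⟨a, haBags, hx⟩
  have hp3mem : p₃ ∈ clusterVertsW bag ξ T := hbagasub hp3a
  refine ⟨⟨a, haBags, hmink, hp3a, hbef⟩, ?_, ?_⟩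
  · -- part 2
    have hsub : {u | IntroducedBy bag ξ w T u} ⊆
        ↑(clusterVertsW bag ξ T \ bag a) := by
      intro u hu
      simp only [Set.mem_setOf_eq] at hu
      simp only [Finset.coe_sdiff, Set.mem_diff, Finset.mem_coe]
      exact ⟨hu.1, hnotintro u hu⟩
    calc {u | IntroducedBy bag ξ w T u}.ncard
        ≤ (↑(clusterVertsW bag ξ T \ bag a) : Set ℕ).ncard :=
          Set.ncard_le_ncard hsub (Finset.finite_toSet _)
      _ = (clusterVertsW bag ξ T \ bag a).card := Set.ncard_coe_finset _
      _ = (clusterVertsW bag ξ T).card - (bag a).card :=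
          Finset.card_sdiff_of_subset hbagasub
      _ = (clusterVertsW bag ξ T).card - (w + 1) := by
          rw [hoddc a ha1 haξ haodd]
  · -- part 3
    intro i hi
    obtain ⟨hiV, hiw, _⟩ := hi
    obtain ⟨k, hkBags, hik⟩ := Finset.mem_biUnion.1 hiV
    obtain ⟨hk1, hkξ, hTk⟩ := hBagsmem k hkBags
    have hkb : k ≤ b := hleb k hkBags
    have hin : i ≤ n := (Finset.mem_Icc.1 (hbsub k hk1 hkξ hik)).2
    have hfbi : fb i ≤ k := by
      by_contra h
      exact (hfb i hiw hin).2.2.2 k hk1 (by omega) hik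
    have hfilsub : (Finset.Icc 1 i).filter (fun u => G.Adj p₃ u) ⊆
        (clusterVertsW bag ξ T).erase p₃ := by
      intro u hu
      rw [Finset.mem_filter, Finset.mem_Icc] at hu
      obtain ⟨⟨hu1, hui⟩, hadj⟩ := hu
      rw [Finset.mem_erase]
      refine ⟨hadj.ne', ?_⟩
      obtain ⟨m, hm1, hmξ, hp3m, hum⟩ := hedge p₃ u hadj
      have ham : a ≤ m := by
        by_contra h
        exact hbef m hm1 (by omega) hp3m
      by_cases hmb : m ≤ b
      · exact Finset.mem_biUnion.2 ⟨m, hbagssub m ham hmb, hum⟩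
      · push_neg at hmb
        have hubagb : u ∈ bag b := by
          by_cases hu2 : u ≤ w + 1
          · have : u ∈ bag 1 := by rw [hbag1, Finset.mem_Icc]; exact ⟨hu1, hu2⟩
            exact hconv u 1 m b (le_refl 1) hmξ hb1 (by omega) this hum
          · push_neg at hu2
            have hun : u ≤ n := (Finset.mem_Icc.1 (hbsub m hm1 hmξ hum)).2
            have hfbu : fb u ≤ fb i := by
              rcases Nat.lt_or_ge u i with h | h
              · exact le_of_lt (hmono u i hu2 h hin)
              · have : u = i := by omega
                rw [this]
            obtain ⟨hf1, hf2, hf3, _⟩ := hfb u hu2 hun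
            exact hconv u (fb u) m b hf1 hmξ (by omega) (by omega) hf3 hum
        exact Finset.mem_biUnion.2 ⟨b, hbmem, hubagb⟩
    calc degIn G i p₃ ≤ ((clusterVertsW bag ξ T).erase p₃).card :=
          Finset.card_le_card hfilsub
      _ = (clusterVertsW bag ξ T).card - 1 := Finset.card_erase_of_mem hp3mem
end
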